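/- arXiv:1905.08841 — 11 statements merged into one kernel-verified Lean document; each statement's English description precedes it below -/
import Mathlib

section
/- There exists an absolute constant C such that the following holds. For every integer k ≥ 2 and every digraph G on n ≥ 2 vertices, there exists a set F of shortcut edges of G with |F| ≤ C·n·k·(log n)³ such that for all vertices u, v of G with u ⪯ v, the distance from u to v in the digraph obtained from G by adding the edges of F is at most C·(4√2)^{(log n)/(log k)}·√n. -/
/-- `HasPath E n u v` : there is a directed path with exactly `n` edges from
`u` to `v` in the digraph with edge relation `E`. -/
def HasPath {V : Type} (E : V → V → Prop) : ℕ → V → V → Prop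
  | 0, u, v => u = v
  | n + 1, u, v => ∃ w, E u w ∧ HasPath E n w v

/-- `u ⪯ v` : there is a directed path (possibly of length 0) from `u` to `v`. -/
def Reach {V : Type} (E : V → V → Prop) (u v : V) : Prop := ∃ n, HasPath E n u v

/-- The distance from `u` to `v` in the digraph with edge relation `E`
(valued in `ℝ≥0∞`, equal to `⊤` if `v` is unreachable from `u`). -/
noncomputable def ddist {V : Type} (E : V → V → Prop) (u v : V) : ENNReal :=
  sInf {n : ENNReal | ∃ m : ℕ, n = (m : ENNReal) ∧ HasPath E m u v}

namespace SC
variable {V : Type} {E E' : V → V → Prop}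

theorem hp_comp : ∀ {a b : ℕ} {u w v : V}, HasPath E a u w → HasPath E b w v →
    HasPath E (a + b) u v := by
  intro a
  induction a with
  | zero => intro b u w v h1 h2; cases h1; simpa using h2
  | succ n ih =>
    intro b u w v h1 h2
    obtain ⟨x, hx, hp⟩ := h1
    have h3 : n + 1 + b = (n + b) + 1 := by omega
    rw [h3]
    exact ⟨x, hx, ih hp h2⟩

theorem hp_mono (h : ∀ a b, E a b → E' a b) :
    ∀ {m : ℕ} {u v : V}, HasPath E m u v → HasPath E' m u v := by
  intro m
  induction m with
  | zero => intro u v h1; exact h1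
  | succ n ih =>
    intro u v h1
    obtain ⟨w, hw, hp⟩ := h1
    exact ⟨w, h _ _ hw, ih hp⟩

theorem hp_rev : ∀ {m : ℕ} {u v : V}, HasPath E m u v →
    HasPath (fun a b => E b a) m v u := by
  intro m
  induction m with
  | zero => intro u v h1; exact h1.symm
  | succ n ih =>
    intro u v h1
    obtain ⟨w, hw, hp⟩ := h1
    have h2 : HasPath (fun a b => E b a) n v w := ih hp
    have h3 : HasPath (fun a b => E b a) 1 w u := ⟨u, hw, rfl⟩
    have := hp_comp h2 h3
    exact this

/-- natural-number distance -/
noncomputable def nd (E : V → V → Prop) (u v : V) : ℕ := sInf {m | HasPath E m u v}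

theorem nd_hp (h : Reach E u v) : HasPath E (nd E u v) u v := Nat.sInf_mem h

theorem nd_le {m : ℕ} (h : HasPath E m u v) : nd E u v ≤ m := Nat.sInf_le h

theorem nd_triangle (h1 : Reach E u w) (h2 : Reach E w v) :
    nd E u v ≤ nd E u w + nd E w v := nd_le (hp_comp (nd_hp h1) (nd_hp h2))

theorem nd_step {m : ℕ} (h : Reach E u v) (hm : nd E u v = m + 1) :
    ∃ w, E u w ∧ Reach E w v ∧ nd E w v = m := by
  have h1 : HasPath E (m + 1) u v := hm ▸ nd_hp h
  obtain ⟨w, hw, hp⟩ := h1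
  refine ⟨w, hw, ⟨m, hp⟩, le_antisymm (nd_le hp) ?_⟩
  by_contra hc
  push_neg at hc
  have h2 : HasPath E (nd E w v) w v := nd_hp ⟨m, hp⟩
  have h3 : HasPath E (1 + nd E w v) u v := hp_comp (⟨w, hw, rfl⟩ : HasPath E 1 u w) h2
  have := nd_le h3
  omega

end SC

namespace SC
variable {V : Type} {E : V → V → Prop}

open Classical in
/-- canonical next step towards `v` -/
noncomputable def nxt (E : V → V → Prop) (v z : V) : V :=
  if h : ∃ w, E z w ∧ Reach E w v ∧ nd E w v = nd E z v - 1 then h.choose else z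

theorem walk_spec (v : V) : ∀ (i : ℕ) (z : V), Reach E z v → i ≤ nd E z v →
    HasPath E i z ((nxt E v)^[i] z) ∧ Reach E ((nxt E v)^[i] z) v ∧
      nd E ((nxt E v)^[i] z) v = nd E z v - i := by
  intro i
  induction i with
  | zero => intro z hz _; exact ⟨rfl, hz, rfl⟩
  | succ n ih =>
    intro z hz hn
    obtain ⟨hp, hr, hnd⟩ := ih z hz (by omega)
    set y := (nxt E v)^[n] z with hy
    have hy1 : nd E y v = (nd E z v - (n + 1)) + 1 := by omega
    obtain ⟨w, hw, hrw, hndw⟩ := nd_step hr hy1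
    have hex : ∃ w, E y w ∧ Reach E w v ∧ nd E w v = nd E y v - 1 :=
      ⟨w, hw, hrw, by omega⟩
    rw [Function.iterate_succ_apply', ← hy]
    have hspec := hex.choose_spec
    set w' := hex.choose with hw'
    have hnxt : nxt E v y = w' := by rw [nxt]; rw [dif_pos hex]
    rw [hnxt]
    refine ⟨hp_comp hp (⟨w', hspec.1, rfl⟩ : HasPath E 1 y w'), hspec.2.1, ?_⟩
    have := hspec.2.2
    omega

/-- the canonical set of vertices of the canonical walk from z towards v, length L -/
noncomputable def cset (E : V → V → Prop) (L : ℕ) (z v : V) : Finset V :=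
  haveI := Classical.decEq V
  (Finset.range (L + 1)).image (fun i => (nxt E v)^[i] z)

theorem cset_card {L : ℕ} {z v : V} (hr : Reach E z v) (hnd : nd E z v = L) :
    (cset E L z v).card = L + 1 := by
  classical
  rw [cset]
  rw [Finset.card_image_of_injOn, Finset.card_range]
  intro a ha b hb hab
  simp only [Finset.coe_range, Set.mem_Iio] at ha hb
  have h1 := walk_spec v a z hr (by omega)
  have h2 := walk_spec v b z hr (by omega)
  have hab' : (nxt E v)^[a] z = (nxt E v)^[b] z := hab
  rw [hab'] at h1
  have := h1.2.2
  have := h2.2.2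
  omega


section Hitting
variable {V : Type} [Fintype V] [DecidableEq V]

theorem hitting (s : ℕ) (hs1 : 1 ≤ s) :
    ∀ (t : ℕ) (𝒜 : Finset (Finset V)), (∀ A ∈ 𝒜, s ≤ A.card) →
    ((𝒜.card : ℝ) * (1 - (s : ℝ) / (Fintype.card V : ℝ)) ^ t < 1) →
    ∃ S : Finset V, S.card ≤ t ∧ ∀ A ∈ 𝒜, (A ∩ S).Nonempty := by
  intro t
  induction t with
  | zero =>
    intro 𝒜 hs ht
    refine ⟨∅, le_refl 0, ?_⟩
    simp only [pow_zero, mul_one] at ht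
    have : 𝒜.card = 0 := by exact_mod_cast Nat.lt_one_iff.mp (by exact_mod_cast ht)
    intro A hA
    simp [Finset.card_eq_zero.mp this] at hA
  | succ t ih =>
    intro 𝒜 hs ht
    rcases Finset.eq_empty_or_nonempty 𝒜 with h𝒜 | h𝒜
    · exact ⟨∅, Nat.zero_le _, by simp [h𝒜]⟩
    obtain ⟨A₀, hA₀⟩ := h𝒜
    set n := Fintype.card V with hn
    have hn1 : 1 ≤ n := le_trans hs1 (le_trans (hs A₀ hA₀) (Finset.card_le_univ A₀))
    have hsn : s ≤ n := le_trans (hs A₀ hA₀) (Finset.card_le_univ A₀)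
    haveI : Nonempty V := Fintype.card_pos_iff.mp hn1
    set m := 𝒜.card with hm
    set deg := fun x : V => (𝒜.filter (fun A => x ∈ A)).card with hdeg
    -- double counting
    have hsum : ∑ x : V, deg x = ∑ A ∈ 𝒜, A.card := by
      simp only [hdeg, Finset.card_filter]
      rw [Finset.sum_comm]
      refine Finset.sum_congr rfl fun A _ => ?_
      rw [← Finset.card_filter, Finset.filter_univ_mem]
    have hsum2 : m * s ≤ ∑ x : V, deg x := by
      rw [hsum, hm]
      calc 𝒜.card * s = ∑ _A ∈ 𝒜, s := by rw [Finset.sum_const, smul_eq_mul, mul_comm]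
        _ ≤ ∑ A ∈ 𝒜, A.card := Finset.sum_le_sum hs
    have hex : ∃ x : V, m * s ≤ n * deg x := by
      by_contra hc
      push_neg at hc
      have : ∑ x : V, n * deg x < ∑ _x : V, m * s := by
        apply Finset.sum_lt_sum_of_nonempty Finset.univ_nonempty
        intro x _; exact hc x
      rw [← Finset.mul_sum, Finset.sum_const, Finset.card_univ, smul_eq_mul, ← hn] at this
      nlinarith [hsum2, Nat.zero_le (∑ x : V, deg x)]
    obtain ⟨x, hx⟩ := hex
    set 𝒜' := 𝒜.filter (fun A => x ∉ A) with h𝒜'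
    have hdegle : deg x ≤ m := Finset.card_filter_le _ _
    have hcard' : 𝒜'.card = m - deg x := by
      have h2 := Finset.card_filter_add_card_filter_not (s := 𝒜) (p := fun A => x ∈ A)
      rw [← h𝒜'] at h2
      have h3 : (Finset.filter (fun A => x ∈ A) 𝒜).card = deg x := rfl
      rw [h3] at h2
      omega
    -- real arithmetic
    have hnR : (0:ℝ) < n := by exact_mod_cast hn1
    have hfrac : (0:ℝ) ≤ 1 - (s:ℝ)/n := by
      rw [sub_nonneg, div_le_one hnR]; exact_mod_cast hsn
    have hkey : (𝒜'.card : ℝ) ≤ (m : ℝ) * (1 - (s:ℝ)/n) := by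
      rw [hcard']
      rw [Nat.cast_sub hdegle]
      have : (m : ℝ) * (s:ℝ) / (n:ℝ) ≤ (deg x : ℝ) := by
        rw [div_le_iff₀ hnR]
        calc (m:ℝ) * s = ((m * s : ℕ) : ℝ) := by push_cast; ring
          _ ≤ ((n * deg x : ℕ) : ℝ) := by exact_mod_cast hx
          _ = (deg x : ℝ) * n := by push_cast; ring
      have hexp : (m:ℝ) * (1 - (s:ℝ)/(n:ℝ)) = (m:ℝ) - (m:ℝ) * (s:ℝ) / (n:ℝ) := by ring
      rw [hexp]
      linarith
    have hih : ((𝒜'.card : ℝ)) * (1 - (s:ℝ)/n) ^ t < 1 := by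
      calc ((𝒜'.card : ℝ)) * (1 - (s:ℝ)/n) ^ t
          ≤ ((m : ℝ) * (1 - (s:ℝ)/n)) * (1 - (s:ℝ)/n) ^ t := by
            apply mul_le_mul_of_nonneg_right hkey (pow_nonneg hfrac t)
        _ = (m : ℝ) * (1 - (s:ℝ)/n) ^ (t+1) := by ring
        _ < 1 := ht
    obtain ⟨S', hS'card, hS'hit⟩ := ih 𝒜' (fun A hA => hs A (Finset.mem_filter.mp hA).1) hih
    refine ⟨insert x S', le_trans (Finset.card_insert_le _ _) (by omega), ?_⟩
    intro A hA
    by_cases hxA : x ∈ A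
    · exact ⟨x, Finset.mem_inter.mpr ⟨hxA, Finset.mem_insert_self _ _⟩⟩
    · obtain ⟨y, hy⟩ := hS'hit A (Finset.mem_filter.mpr ⟨hA, hxA⟩)
      rw [Finset.mem_inter] at hy
      exact ⟨y, Finset.mem_inter.mpr ⟨hy.1, Finset.mem_insert_of_mem hy.2⟩⟩

end Hitting

theorem arith_edges {x l kk f : ℝ} (hx : 0 < x) (hl : (0.6931471803:ℝ) ≤ l)
    (hk : 2 ≤ kk) (hf : f ≤ 36 * x * l ^ 2) : f ≤ 100 * x * kk * l ^ 3 := by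
  nlinarith [mul_nonneg hx.le (sq_nonneg l),
    mul_nonneg (mul_nonneg hx.le (sq_nonneg l)) (le_trans (by norm_num) hl : (0:ℝ) ≤ l)]

theorem one_le_c : (1:ℝ) ≤ 4 * Real.sqrt 2 := by
  nlinarith [Real.one_le_sqrt.mpr (by norm_num : (1:ℝ) ≤ 2), Real.sqrt_nonneg 2]

theorem arith_diam {m s rp : ℝ} (h1 : m ≤ 2*s+1) (h2 : 1 ≤ s) (h3 : 1 ≤ rp) :
    m ≤ 100 * rp * s := by nlinarith

end SC

set_option maxHeartbeats 1000000 in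

set_option maxHeartbeats 1000000 in
open SC in
/-- There is an absolute constant `C` such that for every integer `k ≥ 2` and
every digraph `G` on `n ≥ 2` vertices there is a set `F` of shortcut edges with
`|F| ≤ C·n·k·(log n)³` such that for all `u ⪯ v` the distance from `u` to `v`
in `G ∪ F` is at most `C·(4√2)^{(log n)/(log k)}·√n`. -/
theorem stmt_0 :
    ∃ C : ℝ, 0 < C ∧
      ∀ (V : Type) [Fintype V] (E : V → V → Prop) (k : ℕ),
        2 ≤ k → 2 ≤ Fintype.card V →
        ∃ F : Finset (V × V),
          (∀ e ∈ F, Reach E e.1 e.2) ∧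
          (F.card : ℝ) ≤
            C * (Fintype.card V : ℝ) * (k : ℝ) * (Real.log (Fintype.card V)) ^ 3 ∧
          ∀ u v : V, Reach E u v →
            ddist (fun a b => E a b ∨ (a, b) ∈ F) u v ≤
              ENNReal.ofReal
                (C * (4 * Real.sqrt 2) ^ (Real.log (Fintype.card V) / Real.log k) *
                  Real.sqrt (Fintype.card V)) := by

  classical
  refine ⟨100, by norm_num, ?_⟩
  intro V _ E k hk hn2
  set n := Fintype.card V with hn
  set L := Nat.sqrt n with hL
  set Erev : V → V → Prop := fun a b => E b a with hErev
  -- the family of canonical walk vertex sets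
  set 𝒜 : Finset (Finset V) :=
    ((Finset.univ ×ˢ Finset.univ).filter
        (fun p : V × V => Reach E p.1 p.2 ∧ nd E p.1 p.2 = L)).image
      (fun p => cset E L p.1 p.2) ∪
    ((Finset.univ ×ˢ Finset.univ).filter
        (fun p : V × V => Reach Erev p.1 p.2 ∧ nd Erev p.1 p.2 = L)).image
      (fun p => cset Erev L p.1 p.2) with h𝒜
  have h𝒜card : (𝒜.card : ℝ) ≤ 2 * n ^ 2 := by
    have h1 := Finset.card_union_le
      (((Finset.univ ×ˢ Finset.univ).filter
        (fun p : V × V => Reach E p.1 p.2 ∧ nd E p.1 p.2 = L)).image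
        (fun p => cset E L p.1 p.2))
      (((Finset.univ ×ˢ Finset.univ).filter
        (fun p : V × V => Reach Erev p.1 p.2 ∧ nd Erev p.1 p.2 = L)).image
        (fun p => cset Erev L p.1 p.2))
    have h2 : ∀ (P : V × V → Prop) [DecidablePred P] (f : V × V → Finset V),
        (((Finset.univ ×ˢ Finset.univ).filter P).image f).card ≤ n ^ 2 := by
      intro P _ f
      calc (((Finset.univ ×ˢ Finset.univ).filter P).image f).card
          ≤ ((Finset.univ ×ˢ Finset.univ).filter P).card := Finset.card_image_le
        _ ≤ (Finset.univ ×ˢ Finset.univ : Finset (V × V)).card := Finset.card_filter_le _ _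
        _ = n ^ 2 := by rw [Finset.card_product]; simp [hn, sq]
    have := h2 (fun p : V × V => Reach E p.1 p.2 ∧ nd E p.1 p.2 = L) (fun p => cset E L p.1 p.2)
    have := h2 (fun p : V × V => Reach Erev p.1 p.2 ∧ nd Erev p.1 p.2 = L)
      (fun p => cset Erev L p.1 p.2)
    rw [h𝒜]
    push_cast
    have h3 := h1
    calc (((((Finset.univ ×ˢ Finset.univ).filter
        (fun p : V × V => Reach E p.1 p.2 ∧ nd E p.1 p.2 = L)).image
        (fun p => cset E L p.1 p.2)) ∪
      (((Finset.univ ×ˢ Finset.univ).filter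
        (fun p : V × V => Reach Erev p.1 p.2 ∧ nd Erev p.1 p.2 = L)).image
        (fun p => cset Erev L p.1 p.2))).card : ℝ) ≤ ((n^2 + n^2 : ℕ) : ℝ) := by
          exact_mod_cast le_trans h1 (by omega)
      _ = 2 * (n:ℝ)^2 := by push_cast; ring
  have h𝒜size : ∀ A ∈ 𝒜, L + 1 ≤ A.card := by
    intro A hA
    rw [h𝒜, Finset.mem_union] at hA
    rcases hA with hA | hA <;>
    · obtain ⟨p, hp, rfl⟩ := Finset.mem_image.mp hA
      have h := (Finset.mem_filter.mp hp).2
      rw [cset_card h.1 h.2]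
  -- numeric preliminaries
  have hnR : (2:ℝ) ≤ (n:ℝ) := by exact_mod_cast hn2
  have hn0 : (0:ℝ) < (n:ℝ) := by linarith
  have hsqrt1 : 1 ≤ Real.sqrt n := Real.one_le_sqrt.mpr (by linarith)
  have hsqrt0 : 0 ≤ Real.sqrt n := by linarith
  have hlog2 : (0.6931471803:ℝ) ≤ Real.log n :=
    le_trans Real.log_two_gt_d9.le (Real.log_le_log (by norm_num) hnR)
  have hlog0 : 0 ≤ Real.log n := by linarith
  have hsLn : L + 1 ≤ n := Nat.sqrt_lt_self (by omega)
  have hsq : Real.sqrt n * Real.sqrt n = (n:ℝ) := Real.mul_self_sqrt (by positivity)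
  have hLle : (L:ℝ) ≤ Real.sqrt n := Real.nat_sqrt_le_real_sqrt
  have hsrts : Real.sqrt n ≤ (L:ℝ) + 1 := by
    have h1 : (n:ℝ) ≤ ((L:ℝ) + 1)^2 := by exact_mod_cast (Nat.lt_succ_sqrt' n).le
    have := Real.sqrt_le_sqrt h1
    rwa [Real.sqrt_sq (by positivity)] at this
  set t := ⌈3 * Real.sqrt n * Real.log n⌉₊ + 1 with htdef
  have htlow : 3 * Real.sqrt n * Real.log n + 1 ≤ (t:ℝ) := by
    have := Nat.le_ceil (3 * Real.sqrt n * Real.log n)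
    push_cast [htdef]
    linarith
  have hthigh : (t:ℝ) ≤ 3 * Real.sqrt n * Real.log n + 2 := by
    have := Nat.ceil_lt_add_one (a := 3 * Real.sqrt n * Real.log n) (by positivity)
    push_cast [htdef]
    linarith
  -- hitting hypothesis
  have hmain : (𝒜.card:ℝ) * (1 - ((L+1:ℕ):ℝ)/((Fintype.card V):ℝ))^t < 1 := by
    rw [← hn]
    have hcast : ((L+1:ℕ):ℝ) = (L:ℝ)+1 := by push_cast; ring
    rw [hcast]
    have h0 : (0:ℝ) ≤ 1 - ((L:ℝ)+1)/(n:ℝ) := by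
      rw [sub_nonneg, div_le_one hn0]
      exact_mod_cast hsLn
    have h1 : 1 - ((L:ℝ)+1)/(n:ℝ) ≤ Real.exp (-(((L:ℝ)+1)/(n:ℝ))) := by
      have := Real.add_one_le_exp (-(((L:ℝ)+1)/(n:ℝ)))
      linarith
    have h2 : (1 - ((L:ℝ)+1)/(n:ℝ))^t ≤ Real.exp (-(((L:ℝ)+1)/(n:ℝ)))^t :=
      pow_le_pow_left₀ h0 h1 t
    have h3 : Real.exp (-(((L:ℝ)+1)/(n:ℝ)))^t
        = Real.exp (-((t:ℝ) * (((L:ℝ)+1)/(n:ℝ)))) := by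
      rw [← Real.exp_nat_mul]
      ring_nf
    have hexp_lt : Real.log (2*(n:ℝ)^2) < (t:ℝ) * (((L:ℝ)+1)/(n:ℝ)) := by
      have hlg : Real.log (2*(n:ℝ)^2) = Real.log 2 + 2 * Real.log n := by
        rw [Real.log_mul (by norm_num) (by positivity), Real.log_pow]
        push_cast
        ring
      have hl2 : Real.log 2 ≤ Real.log n := Real.log_le_log (by norm_num) hnR
      have hstep : (3 * Real.sqrt n * Real.log n + 1) * (Real.sqrt n / (n:ℝ))
          ≤ (t:ℝ) * (((L:ℝ)+1)/(n:ℝ)) := by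
        apply mul_le_mul htlow ?_ (by positivity) (by positivity)
        gcongr
      have heq : (3 * Real.sqrt n * Real.log n + 1) * (Real.sqrt n / (n:ℝ))
          = 3 * Real.log n * ((Real.sqrt n * Real.sqrt n) / (n:ℝ))
            + Real.sqrt n / (n:ℝ) := by ring
      have hpos : 0 < Real.sqrt n / (n:ℝ) := by positivity
      rw [hlg]
      rw [heq, hsq, div_self (ne_of_gt hn0)] at hstep
      nlinarith
    calc (𝒜.card:ℝ) * (1 - ((L:ℝ)+1)/(n:ℝ))^t
        ≤ (2*(n:ℝ)^2) * Real.exp (-((t:ℝ) * (((L:ℝ)+1)/(n:ℝ)))) := by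
          rw [← h3]
          exact mul_le_mul h𝒜card h2 (pow_nonneg h0 t) (by positivity)
      _ = Real.exp (Real.log (2*(n:ℝ)^2) - (t:ℝ) * (((L:ℝ)+1)/(n:ℝ))) := by
          rw [Real.exp_sub, Real.exp_log (by positivity), Real.exp_neg]
          ring
      _ < 1 := by
          have h4 : Real.exp (Real.log (2*(n:ℝ)^2) - (t:ℝ) * (((L:ℝ)+1)/(n:ℝ)))
              < Real.exp 0 := Real.exp_lt_exp.mpr (by linarith)
          rwa [Real.exp_zero] at h4
  obtain ⟨S, hScard, hShit⟩ := hitting (L+1) (by omega) t 𝒜 h𝒜size hmain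
  set F := (S ×ˢ S).filter (fun p : V × V => Reach E p.1 p.2) with hF
  refine ⟨F, ?_, ?_, ?_⟩
  · intro e he
    exact (Finset.mem_filter.mp he).2
  · -- cardinality of F
    have hFS : F.card ≤ S.card * S.card := by
      calc F.card ≤ (S ×ˢ S).card := Finset.card_filter_le _ _
        _ = S.card * S.card := Finset.card_product _ _
    have h6 : (S.card:ℝ) ≤ 6 * Real.sqrt n * Real.log n := by
      have h1 : (S.card:ℝ) ≤ (t:ℝ) := by exact_mod_cast hScard
      nlinarith
    have hF2 : (F.card:ℝ) ≤ 36 * (n:ℝ) * (Real.log n)^2 := by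
      have h1 : (F.card:ℝ) ≤ (S.card:ℝ) * (S.card:ℝ) := by exact_mod_cast hFS
      have h2 : (S.card:ℝ) * (S.card:ℝ)
          ≤ (6 * Real.sqrt n * Real.log n) * (6 * Real.sqrt n * Real.log n) :=
        mul_le_mul h6 h6 (by positivity) (by positivity)
      have h3 : (6 * Real.sqrt n * Real.log n) * (6 * Real.sqrt n * Real.log n)
          = 36 * (Real.sqrt n * Real.sqrt n) * (Real.log n)^2 := by ring
      rw [h3, hsq] at h2
      linarith
    have hkR : (2:ℝ) ≤ (k:ℝ) := by exact_mod_cast hk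
    exact arith_edges hn0 hlog2 hkR hF2
  · -- the diameter bound
    intro u v hruv
    have key : ∃ m : ℕ, m ≤ 2*L+1 ∧ HasPath (fun a b => E a b ∨ (a, b) ∈ F) m u v := by
      set ℓ := nd E u v with hℓ
      by_cases hcase : ℓ ≤ 2*L+1
      · exact ⟨ℓ, hcase, hp_mono (fun a b h => Or.inl h) (nd_hp hruv)⟩
      push_neg at hcase
      -- reversed reachability
      have hrev : Reach Erev v u := ⟨ℓ, hp_rev (nd_hp hruv)⟩
      have hndrev : nd Erev v u = ℓ := by
        refine le_antisymm (nd_le (hp_rev (nd_hp hruv))) ?_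
        have h1 : HasPath E (nd Erev v u) u v := hp_rev (nd_hp hrev)
        exact nd_le h1
      -- first canonical walk: backwards from v, ℓ - L steps
      obtain ⟨hpz, hrz, hndz⟩ := walk_spec (E := Erev) u (ℓ - L) v hrev (by omega)
      set z := (nxt Erev u)^[ℓ - L] v with hzdef
      rw [hndrev] at hndz
      have hndzL : nd Erev z u = L := by omega
      have hA1 : cset Erev L z u ∈ 𝒜 := by
        rw [h𝒜]
        apply Finset.mem_union_right
        apply Finset.mem_image.mpr
        exact ⟨(z, u), Finset.mem_filter.mpr
          ⟨Finset.mem_product.mpr ⟨Finset.mem_univ _, Finset.mem_univ _⟩, hrz, hndzL⟩, rfl⟩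
      obtain ⟨s, hs⟩ := hShit _ hA1
      rw [Finset.mem_inter] at hs
      obtain ⟨hsA, hsS⟩ := hs
      rw [cset, Finset.mem_image] at hsA
      obtain ⟨i, hi, hsi⟩ := hsA
      rw [Finset.mem_range] at hi
      obtain ⟨hpzs, hrsu, hndsu⟩ := walk_spec (E := Erev) u i z hrz (by omega)
      rw [hsi] at hpzs hrsu hndsu
      rw [hndzL] at hndsu
      -- s is within L - i of u (in E), and reaches v
      have hus : HasPath E (L - i) u s := by
        have h2 := nd_hp hrsu
        rw [hndsu] at h2
        exact hp_rev h2
      have hsv : HasPath E ((ℓ - L) + i) s v := hp_rev (hp_comp hpz hpzs)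
      have hrsv : Reach E s v := ⟨_, hsv⟩
      set ℓ' := nd E s v with hℓ'def
      have hℓ'ge : L ≤ ℓ' := by
        have htri : ℓ ≤ nd E u s + ℓ' := nd_triangle ⟨_, hus⟩ hrsv
        have h3 : nd E u s ≤ L - i := nd_le hus
        omega
      -- second canonical walk: forwards from s, ℓ' - L steps
      obtain ⟨hpz2, hrz2, hndz2⟩ := walk_spec (E := E) v (ℓ' - L) s hrsv (by omega)
      set z2 := (nxt E v)^[ℓ' - L] s with hz2def
      rw [← hℓ'def] at hndz2
      have hndz2L : nd E z2 v = L := by omega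
      have hA2 : cset E L z2 v ∈ 𝒜 := by
        rw [h𝒜]
        apply Finset.mem_union_left
        apply Finset.mem_image.mpr
        exact ⟨(z2, v), Finset.mem_filter.mpr
          ⟨Finset.mem_product.mpr ⟨Finset.mem_univ _, Finset.mem_univ _⟩, hrz2, hndz2L⟩, rfl⟩
      obtain ⟨s', hs'⟩ := hShit _ hA2
      rw [Finset.mem_inter] at hs'
      obtain ⟨hs'A, hs'S⟩ := hs'
      rw [cset, Finset.mem_image] at hs'A
      obtain ⟨j, hj, hs'j⟩ := hs'A
      rw [Finset.mem_range] at hj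
      obtain ⟨hpz2s', hrs'v, hnds'v⟩ := walk_spec (E := E) v j z2 hrz2 (by omega)
      rw [hs'j] at hpz2s' hrs'v hnds'v
      rw [hndz2L] at hnds'v
      have hs'v : HasPath E (L - j) s' v := by
        have h4 := nd_hp hrs'v
        rwa [hnds'v] at h4
      have hss' : Reach E s s' := ⟨(ℓ' - L) + j, hp_comp hpz2 hpz2s'⟩
      have hmemF : (s, s') ∈ F := by
        rw [hF]
        exact Finset.mem_filter.mpr ⟨Finset.mem_product.mpr ⟨hsS, hs'S⟩, hss'⟩
      have h1 : HasPath (fun a b => E a b ∨ (a, b) ∈ F) (L - i) u s :=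
        hp_mono (fun a b h => Or.inl h) hus
      have h2 : HasPath (fun a b => E a b ∨ (a, b) ∈ F) 1 s s' := ⟨s', Or.inr hmemF, rfl⟩
      have h3 : HasPath (fun a b => E a b ∨ (a, b) ∈ F) (L - j) s' v :=
        hp_mono (fun a b h => Or.inl h) hs'v
      exact ⟨(L - i) + (1 + (L - j)), by omega, hp_comp h1 (hp_comp h2 h3)⟩

    obtain ⟨m, hm, hpath⟩ := key
    have hmem : (m : ENNReal) ∈
        {x : ENNReal | ∃ m' : ℕ, x = (m' : ENNReal) ∧
          HasPath (fun a b => E a b ∨ (a, b) ∈ F) m' u v} := ⟨m, rfl, hpath⟩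
    refine le_trans (sInf_le hmem) ?_
    rw [← ENNReal.ofReal_natCast m]
    apply ENNReal.ofReal_le_ofReal
    have hlogk : (0:ℝ) ≤ Real.log k := (Real.log_pos (by exact_mod_cast hk)).le
    have hrp : (1:ℝ) ≤ (4 * Real.sqrt 2) ^ (Real.log n / Real.log k) :=
      Real.one_le_rpow one_le_c (div_nonneg hlog0 hlogk)
    have hmR : (m:ℝ) ≤ 2*(L:ℝ)+1 := by exact_mod_cast hm
    exact arith_diam (le_trans hmR (by linarith)) hsqrt1 hrp
end

section
/- There exists an absolute constant C such that for every digraph G on n ≥ 2 vertices and every integer t with 1 ≤ t ≤ n, there exists a set F of shortcut edges of G with |F| ≤ C·t²·(log n)² such that the diameter of the digraph obtained from G by adding the edges of F is at most C·n/t. -/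
/-!
Put `L = ⌊n/t⌋` and fix a shortest path for every pair `u ⪯ v`. Every shortest path with
more than `2L + 1` edges has two disjoint blocks of `L` distinct vertices: the `L` vertices
following its start and the `L` vertices preceding its end. There are at most `2n²` blocks,
each covering an `L/n ≥ 1/(2t)` fraction of the vertices, so the greedy algorithm finds a set
`S` of `k = O(t log n)` hubs meeting all of them. Adding every shortcut between hubs costs
`k² = O(t² log² n)` edges, and afterwards any `u ⪯ v` are joined by walking at most `L` steps
to a hub of the first block, jumping to a hub of the last block, and walking at most `L`
steps to `v`.
-/

open Finset

section Paths

variable {V : Type} {E E' : V → V → Prop}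

lemma HasPath.trans : ∀ {m k : ℕ} {u v w : V},
    HasPath E m u v → HasPath E k v w → HasPath E (m + k) u w
  | 0, _, _, _, _, rfl, h => by simpa using h
  | _ + 1, _, _, _, _, ⟨x, hx, hp⟩, h => by
    rw [Nat.add_right_comm]
    exact ⟨x, hx, hp.trans h⟩

lemma HasPath.mono (h : ∀ a b, E a b → E' a b) :
    ∀ {m : ℕ} {u v : V}, HasPath E m u v → HasPath E' m u v
  | 0, _, _, hp => hp
  | _ + 1, _, _, ⟨w, hw, hp⟩ => ⟨w, h _ _ hw, hp.mono h⟩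

lemma hasPath_iff_exists_seq {m : ℕ} {u v : V} :
    HasPath E m u v ↔
      ∃ p : ℕ → V, p 0 = u ∧ p m = v ∧ ∀ i < m, E (p i) (p (i + 1)) := by
  induction m generalizing u with
  | zero =>
    exact ⟨fun h => ⟨fun _ => u, rfl, h, by simp⟩, fun ⟨p, h0, h1, _⟩ => h0 ▸ h1⟩
  | succ m ih =>
    constructor
    · rintro ⟨w, hw, hp⟩
      obtain ⟨p, h0, h1, hE⟩ := ih.1 hp
      refine ⟨fun i => Nat.casesOn i u p, rfl, h1, ?_⟩
      rintro (_ | i) hi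
      · simpa [h0] using hw
      · exact hE i (by omega)
    · rintro ⟨p, rfl, rfl, hE⟩
      exact ⟨p 1, hE 0 (by omega),
        ih.2 ⟨fun i => p (i + 1), rfl, rfl, fun i hi => hE (i + 1) (by omega)⟩⟩

lemma hasPath_of_seq {m : ℕ} {p : ℕ → V} (hp : ∀ i < m, E (p i) (p (i + 1)))
    {i j : ℕ} (hij : i ≤ j) (hjm : j ≤ m) : HasPath E (j - i) (p i) (p j) :=
  hasPath_iff_exists_seq.2 ⟨fun l => p (i + l), rfl, by simp only [Nat.add_sub_cancel' hij],
    fun l hl => hp (i + l) (by omega)⟩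

lemma hasPath_via_shortcut {m i j : ℕ} {p : ℕ → V} (hp : ∀ l < m, E (p l) (p (l + 1)))
    (hij : i ≤ j) (hjm : j ≤ m) {F : Finset (V × V)} (hF : (p i, p j) ∈ F) :
    HasPath (fun a b => E a b ∨ (a, b) ∈ F) (i + 1 + (m - j)) (p 0) (p m) := by
  have hE : ∀ a b, E a b → E a b ∨ (a, b) ∈ F := fun _ _ => Or.inl
  have hstart : HasPath E i (p 0) (p i) := by
    simpa using hasPath_of_seq hp (Nat.zero_le i) (hij.trans hjm)
  have hjump : HasPath (fun a b => E a b ∨ (a, b) ∈ F) 1 (p i) (p j) :=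
    ⟨p j, Or.inr hF, rfl⟩
  exact ((hstart.mono hE).trans hjump).trans ((hasPath_of_seq hp hjm le_rfl).mono hE)

lemma injOn_of_hasPath_minimal {m : ℕ} {p : ℕ → V} (hp : ∀ i < m, E (p i) (p (i + 1)))
    (hmin : ∀ m', HasPath E m' (p 0) (p m) → m ≤ m') : Set.InjOn p (Set.Iic m) := by
  -- a repeated vertex `p i = p j` with `i < j` would let us skip the loop between them
  have hne : ∀ i j, i < j → j ≤ m → p i ≠ p j := by
    intro i j hij hjm hpij
    have hstart := hasPath_of_seq hp (Nat.zero_le i) (hij.le.trans hjm)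
    have hend := hasPath_of_seq hp hjm le_rfl
    rw [← hpij] at hend
    have := hmin _ (hstart.trans hend)
    omega
  intro i hi j hj hpij
  rcases lt_trichotomy i j with h | h | h
  · exact absurd hpij (hne i j h hj)
  · exact h
  · exact absurd hpij.symm (hne j i h hi)

lemma exists_injOn_seq_of_reach {u v : V} (h : Reach E u v) :
    ∃ (m : ℕ) (p : ℕ → V), p 0 = u ∧ p m = v ∧ (∀ i < m, E (p i) (p (i + 1))) ∧
      Set.InjOn p (Set.Iic m) := by
  classical
  obtain ⟨p, h0, h1, hp⟩ := hasPath_iff_exists_seq.1 (Nat.find_spec h)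
  refine ⟨_, p, h0, h1, hp, injOn_of_hasPath_minimal hp ?_⟩
  rw [h0, h1]
  exact fun m' hm' => Nat.find_min' h hm'

lemma ddist_le_of_hasPath {m : ℕ} {u v : V} (h : HasPath E m u v) : ddist E u v ≤ m :=
  sInf_le ⟨m, rfl, h⟩

end Paths

section Hitting

variable {α : Type*} [Fintype α] [DecidableEq α]

lemma Finset.exists_sum_card_le_mul_card_filter_mem [Nonempty α] (𝒜 : Finset (Finset α)) :
    ∃ x, ∑ A ∈ 𝒜, #A ≤ Fintype.card α * #{A ∈ 𝒜 | x ∈ A} := by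
  obtain ⟨x, -, hx⟩ := exists_mem_eq_sup univ univ_nonempty fun x => #{A ∈ 𝒜 | x ∈ A}
  exact ⟨x, hx ▸ sum_card_le fun a =>
    le_sup (f := fun x => #{A ∈ 𝒜 | x ∈ A}) (mem_univ a)⟩

lemma Finset.exists_card_filter_not_mem_le [Nonempty α] {L : ℕ} (𝒜 : Finset (Finset α))
    (h𝒜 : ∀ A ∈ 𝒜, L ≤ #A) :
    ∃ x, (#{A ∈ 𝒜 | x ∉ A} : ℝ) ≤ #𝒜 * (1 - L / Fintype.card α) := by
  set n := Fintype.card α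
  have hn : (0 : ℝ) < n := by exact_mod_cast Fintype.card_pos
  obtain ⟨x, hx⟩ := exists_sum_card_le_mul_card_filter_mem 𝒜
  have hsum : #𝒜 * L ≤ ∑ A ∈ 𝒜, #A := by
    simpa [mul_comm] using card_nsmul_le_sum 𝒜 card L h𝒜
  have hsplit : (#{A ∈ 𝒜 | x ∈ A} : ℝ) + #{A ∈ 𝒜 | x ∉ A} = #𝒜 := by
    exact_mod_cast card_filter_add_card_filter_not (s := 𝒜) (fun A => x ∈ A)
  have hmem : (#𝒜 : ℝ) * L / n ≤ #{A ∈ 𝒜 | x ∈ A} := by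
    rw [div_le_iff₀ hn]
    have : (#𝒜 : ℝ) * L ≤ n * #{A ∈ 𝒜 | x ∈ A} := by exact_mod_cast hsum.trans hx
    linarith
  refine ⟨x, ?_⟩
  rw [mul_one_sub, ← mul_div_assoc]
  linarith

theorem Finset.exists_hitting_set {L : ℕ} (hL : 1 ≤ L) (k : ℕ) (𝒜 : Finset (Finset α))
    (h𝒜 : ∀ A ∈ 𝒜, L ≤ #A) (hk : (#𝒜 : ℝ) * (1 - L / Fintype.card α) ^ k < 1) :
    ∃ S : Finset α, #S ≤ k ∧ ∀ A ∈ 𝒜, ∃ x ∈ A, x ∈ S := by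
  induction k generalizing 𝒜 with
  | zero =>
    have h𝒜0 : 𝒜 = ∅ := by
      rw [pow_zero, mul_one] at hk
      exact card_eq_zero.1 (Nat.lt_one_iff.1 (by exact_mod_cast hk))
    exact ⟨∅, le_rfl, by simp [h𝒜0]⟩
  | succ k ih =>
    obtain rfl | ⟨A₀, hA₀⟩ := 𝒜.eq_empty_or_nonempty
    · exact ⟨∅, by simp, by simp⟩
    obtain ⟨y, -⟩ := card_pos.1 (hL.trans (h𝒜 A₀ hA₀))
    have : Nonempty α := ⟨y⟩
    have hq : 0 ≤ 1 - (L : ℝ) / Fintype.card α := by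
      have := (h𝒜 A₀ hA₀).trans (card_le_univ A₀)
      exact sub_nonneg.2 (div_le_one_of_le₀ (by exact_mod_cast this) (Nat.cast_nonneg _))
    obtain ⟨x, hrest⟩ := exists_card_filter_not_mem_le 𝒜 h𝒜
    obtain ⟨S, hS, hhit⟩ :=
      ih {A ∈ 𝒜 | x ∉ A} (fun A hA => h𝒜 A (mem_filter.1 hA).1) <|
      calc _ ≤ ((#𝒜 : ℝ) * (1 - L / Fintype.card α)) * (1 - L / Fintype.card α) ^ k :=
            mul_le_mul_of_nonneg_right hrest (pow_nonneg hq k)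
        _ = (#𝒜 : ℝ) * (1 - L / Fintype.card α) ^ (k + 1) := by ring
        _ < 1 := hk
    refine ⟨insert x S, (card_insert_le _ _).trans (by omega), fun A hA => ?_⟩
    by_cases hxA : x ∈ A
    · exact ⟨x, hxA, mem_insert_self x S⟩
    · obtain ⟨z, hzA, hzS⟩ := hhit A (mem_filter.2 ⟨hA, hxA⟩)
      exact ⟨z, hzA, mem_insert_of_mem hzS⟩

theorem exists_hub_set {ι : Type*} {L k : ℕ} (hL : 1 ≤ L) (hLn : L ≤ Fintype.card α)
    (P : Finset ι) (D : ι → ℕ) (p : ι → ℕ → α)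
    (hinj : ∀ e ∈ P, Set.InjOn (p e) (Set.Iic (D e)))
    (hlong : ∀ e ∈ P, L ≤ D e) (hk : 2 * (#P : ℝ) * (1 - L / Fintype.card α) ^ k < 1) :
    ∃ S : Finset α, #S ≤ k ∧ ∀ e ∈ P,
      (∃ i ∈ Icc 1 L, p e i ∈ S) ∧ ∃ j ∈ Icc (D e - L) (D e - 1), p e j ∈ S := by
  have hblock : ∀ e ∈ P, ∀ a b, b ≤ D e → #((Icc a b).image (p e)) = b + 1 - a := by
    intro e he a b hb
    rw [card_image_of_injOn, Nat.card_Icc]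
    exact (hinj e he).mono fun i hi => by
      simp only [coe_Icc, Set.mem_Icc, Set.mem_Iic] at hi ⊢
      omega
  set first : ι → Finset α := fun e => (Icc 1 L).image (p e)
  set last : ι → Finset α := fun e => (Icc (D e - L) (D e - 1)).image (p e)
  obtain ⟨S, hS, hhit⟩ := exists_hitting_set hL k (P.image first ∪ P.image last)
    (by
      simp only [mem_union, mem_image]
      rintro _ (⟨e, he, rfl⟩ | ⟨e, he, rfl⟩) <;> have := hlong e he
      · rw [hblock e he _ _ this]; omega
      · rw [hblock e he _ _ (by omega)]; omega)
    (by
      have hq : 0 ≤ 1 - (L : ℝ) / Fintype.card α :=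
        sub_nonneg.2 (div_le_one_of_le₀ (by exact_mod_cast hLn) (Nat.cast_nonneg _))
      have hcard : #(P.image first ∪ P.image last) ≤ 2 * #P := by
        rw [two_mul]
        exact (card_union_le _ _).trans (add_le_add card_image_le card_image_le)
      refine lt_of_le_of_lt ?_ hk
      gcongr
      exact_mod_cast hcard)
  refine ⟨S, hS, fun e he => ⟨?_, ?_⟩⟩
  · obtain ⟨x, hx, hxS⟩ := hhit _ (mem_union_left _ (mem_image_of_mem first he))
    obtain ⟨i, hi, rfl⟩ := mem_image.1 hx
    exact ⟨i, hi, hxS⟩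
  · obtain ⟨x, hx, hxS⟩ := hhit _ (mem_union_right _ (mem_image_of_mem last he))
    obtain ⟨j, hj, rfl⟩ := mem_image.1 hx
    exact ⟨j, hj, hxS⟩

end Hitting

lemma two_mul_sq_mul_one_sub_pow_lt_one {n k : ℕ} {x : ℝ} (hn : 2 ≤ n) (hx : x ≤ 1)
    (hk : 3 * Real.log n < k * x) : 2 * (n : ℝ) ^ 2 * (1 - x) ^ k < 1 := by
  have hn0 : (0 : ℝ) < n := by exact_mod_cast (by omega : 0 < n)
  have hpow : (1 - x) ^ k < ((n : ℝ) ^ 3)⁻¹ :=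
    calc (1 - x) ^ k ≤ Real.exp (-x) ^ k :=
          pow_le_pow_left₀ (sub_nonneg.2 hx) (Real.one_sub_le_exp_neg x) k
      _ = Real.exp (-(k * x)) := by rw [← Real.exp_nat_mul]; ring_nf
      _ < Real.exp (-(3 * Real.log n)) := Real.exp_lt_exp.2 (by linarith)
      _ = ((n : ℝ) ^ 3)⁻¹ := by
        rw [Real.exp_neg, show 3 * Real.log n = Real.log (n ^ 3) by rw [Real.log_pow]; norm_num,
          Real.exp_log (by positivity)]
  calc 2 * (n : ℝ) ^ 2 * (1 - x) ^ k < 2 * (n : ℝ) ^ 2 * ((n : ℝ) ^ 3)⁻¹ := by gcongr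
    _ = 2 / (n : ℝ) := by field_simp
    _ ≤ 1 := by rw [div_le_one hn0]; exact_mod_cast hn

theorem exists_shortcuts_hasPath_le {V : Type} [Fintype V] (E : V → V → Prop) {L k : ℕ}
    (hL : 1 ≤ L) (hLn : L ≤ Fintype.card V)
    (hk : 2 * (Fintype.card V : ℝ) ^ 2 * (1 - L / Fintype.card V) ^ k < 1) :
    ∃ F : Finset (V × V), (∀ e ∈ F, Reach E e.1 e.2) ∧ #F ≤ k ^ 2 ∧
      ∀ u v, Reach E u v →
        ∃ m ≤ 2 * L + 1, HasPath (fun a b => E a b ∨ (a, b) ∈ F) m u v := by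
  classical
  have hseq : ∀ u v, ∃ (D : ℕ) (p : ℕ → V), Reach E u v → p 0 = u ∧ p D = v ∧
      (∀ i < D, E (p i) (p (i + 1))) ∧ Set.InjOn p (Set.Iic D) := by
    intro u v
    by_cases h : Reach E u v
    · obtain ⟨D, p, hp⟩ := exists_injOn_seq_of_reach h
      exact ⟨D, p, fun _ => hp⟩
    · exact ⟨0, fun _ => u, fun h' => absurd h' h⟩
  choose D p hp using hseq
  set P := (univ : Finset (V × V)).filter fun e => Reach E e.1 e.2 ∧ 2 * L + 1 < D e.1 e.2
  obtain ⟨S, hS, hhit⟩ := exists_hub_set hL hLn P (fun e => D e.1 e.2) (fun e => p e.1 e.2)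
    (fun e he => (hp _ _ (mem_filter.1 he).2.1).2.2.2) (fun e he => by
      have := (mem_filter.1 he).2.2
      omega)
    (by
      have hq : 0 ≤ 1 - (L : ℝ) / Fintype.card V :=
        sub_nonneg.2 (div_le_one_of_le₀ (by exact_mod_cast hLn) (Nat.cast_nonneg _))
      have hcard : #P ≤ Fintype.card V ^ 2 := by
        simpa [sq] using card_filter_le (univ : Finset (V × V)) _
      refine lt_of_le_of_lt ?_ hk
      gcongr
      exact_mod_cast hcard)
  refine ⟨(S ×ˢ S).filter fun e => Reach E e.1 e.2, fun e he => (mem_filter.1 he).2, ?_, ?_⟩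
  · calc _ ≤ #(S ×ˢ S) := card_filter_le _ _
      _ = #S ^ 2 := by rw [card_product, sq]
      _ ≤ k ^ 2 := by gcongr
  · intro u v huv
    obtain ⟨h0, hD, hwalk, -⟩ := hp u v huv
    by_cases huvlong : 2 * L + 1 < D u v
    · have he : (u, v) ∈ P := by simp [P, huv, huvlong]
      obtain ⟨⟨i, hi, haS⟩, ⟨j, hj, hbS⟩⟩ := hhit _ he
      simp only [mem_Icc] at hi hj
      have hreach : Reach E (p u v i) (p u v j) :=
        ⟨_, hasPath_of_seq hwalk (by omega) (by omega)⟩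
      have hpath := hasPath_via_shortcut (F := (S ×ˢ S).filter fun e => Reach E e.1 e.2)
        hwalk (by omega) (by omega) (mem_filter.2 ⟨mem_product.2 ⟨haS, hbS⟩, hreach⟩)
      rw [h0, hD] at hpath
      exact ⟨_, by omega, hpath⟩
    · exact ⟨D u v, by omega,
        (hasPath_iff_exists_seq.2 ⟨_, h0, hD, hwalk⟩).mono fun _ _ => Or.inl⟩

lemma exists_hub_count_le {n t : ℕ} (ht1 : 1 ≤ t) (htn : t ≤ n) (hn2 : 2 ≤ n) :
    ∃ k : ℕ, (k : ℝ) ≤ 8 * (t * Real.log n) ∧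
      2 * (n : ℝ) ^ 2 * (1 - (n / t : ℕ) / n) ^ k < 1 := by
  set L := n / t
  set k := ⌊6 * ((t : ℝ) * Real.log n)⌋₊ + 1
  have hL1 : 1 ≤ L := (Nat.one_le_div_iff ht1).2 htn
  have hnL : n ≤ 2 * t * L := by
    have : t * L + n % t = n := Nat.div_add_mod n t
    have := Nat.mod_lt n ht1
    nlinarith
  have htlog : 1 / 2 < (t : ℝ) * Real.log n := by
    have := Real.log_two_gt_d9
    have := Real.log_le_log (by norm_num) (show (2 : ℝ) ≤ n by exact_mod_cast hn2)
    have : (1 : ℝ) ≤ t := by exact_mod_cast ht1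
    nlinarith
  have hk_lt : 6 * ((t : ℝ) * Real.log n) < k := by
    push_cast [k]
    exact Nat.lt_floor_add_one _
  have hk_le : (k : ℝ) ≤ 8 * ((t : ℝ) * Real.log n) := by
    push_cast [k]
    linarith [Nat.floor_le (by positivity : 0 ≤ 6 * ((t : ℝ) * Real.log n))]
  have hkL : 3 * Real.log n < k * ((L : ℝ) / n) := by
    have hn0 : (0 : ℝ) < n := by exact_mod_cast (by omega : 0 < n)
    have : (n : ℝ) ≤ 2 * t * L := by exact_mod_cast hnL
    have : (1 : ℝ) ≤ L := by exact_mod_cast hL1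
    have := Real.log_nonneg (show (1 : ℝ) ≤ n by exact_mod_cast (by omega : 1 ≤ n))
    rw [mul_div_assoc', lt_div_iff₀ hn0]
    nlinarith
  exact ⟨k, hk_le, two_mul_sq_mul_one_sub_pow_lt_one hn2
    (div_le_one_of_le₀ (by exact_mod_cast Nat.div_le_self n t) (Nat.cast_nonneg _)) hkL⟩

/-- There is an absolute constant `C` such that for every digraph `G` on
`n ≥ 2` vertices and every integer `1 ≤ t ≤ n` there is a set `F` of shortcut
edges with `|F| ≤ C·t²·(log n)²` such that the diameter of `G ∪ F` is at most
`C·n/t`, i.e. for all `u ⪯ v` the distance from `u` to `v` in `G ∪ F` is at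
most `C·n/t`. -/
theorem stmt_1 :
    ∃ C : ℝ, 0 < C ∧
      ∀ (V : Type) [Fintype V] (E : V → V → Prop) (t : ℕ),
        1 ≤ t → t ≤ Fintype.card V → 2 ≤ Fintype.card V →
        ∃ F : Finset (V × V),
          (∀ e ∈ F, Reach E e.1 e.2) ∧
          (F.card : ℝ) ≤ C * (t : ℝ) ^ 2 * (Real.log (Fintype.card V)) ^ 2 ∧
          ∀ u v : V, Reach E u v →
            ddist (fun a b => E a b ∨ (a, b) ∈ F) u v ≤
              ENNReal.ofReal (C * (Fintype.card V : ℝ) / (t : ℝ)) := by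
  refine ⟨64, by norm_num, fun V _ E t ht1 htn hn2 => ?_⟩
  set n := Fintype.card V
  have hL1 : 1 ≤ n / t := (Nat.one_le_div_iff ht1).2 htn
  obtain ⟨k, hk_le, hk⟩ := exists_hub_count_le ht1 htn hn2
  obtain ⟨F, hFreach, hFcard, hFdist⟩ :=
    exists_shortcuts_hasPath_le E hL1 (Nat.div_le_self n t) hk
  refine ⟨F, hFreach, ?_, fun u v huv => ?_⟩
  · calc (#F : ℝ) ≤ k ^ 2 := by exact_mod_cast hFcard
      _ ≤ (8 * ((t : ℝ) * Real.log n)) ^ 2 := by gcongr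
      _ = 64 * (t : ℝ) ^ 2 * Real.log n ^ 2 := by ring
  · obtain ⟨m, hm, hpath⟩ := hFdist u v huv
    refine (ddist_le_of_hasPath hpath).trans ?_
    rw [← ENNReal.ofReal_natCast]
    apply ENNReal.ofReal_le_ofReal
    have hL : ((n / t : ℕ) : ℝ) ≤ n / t := Nat.cast_div_le
    have : (m : ℝ) ≤ 3 * (n / t : ℕ) := by exact_mod_cast (by omega : m ≤ 3 * (n / t))
    have : 0 ≤ (n : ℝ) / t := by positivity
    rw [mul_div_assoc]
    linarith
end

section
/- Let X be a binomial random variable with parameters n ∈ ℕ and p ∈ [0,1]. Then for every real δ > 0, Pr[X > (1+δ)·n·p] ≤ exp(−(δ²/(2+δ))·n·p). -/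
open Real Finset

lemma log_ge_div (x : ℝ) (hx : 0 ≤ x) : x / (1 + x) ≤ Real.log (1 + x) := by
  have h1 : (0:ℝ) < 1 + x := by linarith
  have h2 := Real.log_le_sub_one_of_pos (show (0:ℝ) < (1+x)⁻¹ by positivity)
  rw [Real.log_inv] at h2
  have h3 : (1+x)⁻¹ - 1 = -(x/(1+x)) := by field_simp; ring
  rw [h3] at h2
  linarith

lemma key_log (x : ℝ) (hx : 0 ≤ x) : 2*x/(2+x) ≤ Real.log (1+x) := by
  set f : ℝ → ℝ := fun y => (2+y) * Real.log (1+y) - 2*y with hf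
  have hd : ∀ y : ℝ, 0 < y → HasDerivAt f (Real.log (1+y) + (2+y) * ((1+y)⁻¹ * 1) - 2) y := by
    intro y hy
    have h1y : (0:ℝ) < 1 + y := by linarith
    have hid : HasDerivAt (fun z : ℝ => 1 + z) 1 y := (hasDerivAt_id y).const_add 1
    have hlog : HasDerivAt (fun z : ℝ => Real.log (1+z)) ((1+y)⁻¹ * 1) y :=
      (Real.hasDerivAt_log h1y.ne').comp y hid
    have hmul : HasDerivAt (fun z : ℝ => (2+z) * Real.log (1+z))
        (1 * Real.log (1+y) + (2+y) * ((1+y)⁻¹ * 1)) y :=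
      ((hasDerivAt_id y).const_add 2).mul hlog
    have h2y : HasDerivAt (fun z : ℝ => 2*z) 2 y := by
      simpa using (hasDerivAt_id y).const_mul 2
    have := hmul.sub h2y; rw [one_mul] at this; exact this
  have hmono : MonotoneOn f (Set.Ici (0:ℝ)) := by
    apply monotoneOn_of_deriv_nonneg (convex_Ici 0)
    · intro y hy
      have h1y : (0:ℝ) < 1 + y := by
        simp only [Set.mem_Ici] at hy; linarith
      have hlc : ContinuousAt (fun z : ℝ => Real.log (1+z)) y :=
        (Real.continuousAt_log h1y.ne').comp (by fun_prop)
      exact ContinuousAt.continuousWithinAt <| by fun_prop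
    · intro y hy
      rw [interior_Ici] at hy
      exact (hd y hy).differentiableAt.differentiableWithinAt
    · intro y hy
      rw [interior_Ici] at hy
      rw [(hd y hy).deriv]
      have hy' : (0:ℝ) < y := Set.mem_Ioi.mp hy
      have h1y : (0:ℝ) < 1 + y := by linarith
      have := log_ge_div y hy'.le
      have hq : (2+y) * ((1+y)⁻¹ * 1) - 2 = -(y/(1+y)) := by field_simp; ring
      linarith [hq ▸ (le_refl ((2+y) * ((1+y)⁻¹ * 1) - 2)), this]
  have h0 : f 0 ≤ f x := hmono (Set.mem_Ici.mpr (le_refl 0)) (Set.mem_Ici.mpr hx) (Set.mem_Ici.mpr hx)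
  have hf0 : f 0 = 0 := by simp [hf]
  have h2x : (0:ℝ) < 2 + x := by linarith
  rw [div_le_iff₀ h2x]
  have : (2+x) * Real.log (1+x) - 2*x ≥ 0 := by rw [← hf0]; exact h0
  nlinarith [this]

/-- Chernoff bound for a binomial random variable `X ∼ B(n,p)`:
for every real `δ > 0`, `Pr[X > (1+δ)·n·p] ≤ exp(−(δ²/(2+δ))·n·p)`.
The probability is written out explicitly as the sum of the binomial
point masses `C(n,k) p^k (1-p)^(n-k)` over the values `k` with
`k > (1+δ)·n·p`. -/
theorem stmt_2 (n : ℕ) (p : ℝ) (hp0 : 0 ≤ p) (hp1 : p ≤ 1) (δ : ℝ) (hδ : 0 < δ) :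
    (∑ k ∈ Finset.range (n + 1),
        if ((k : ℝ) > (1 + δ) * n * p) then (n.choose k : ℝ) * p ^ k * (1 - p) ^ (n - k) else 0)
      ≤ Real.exp (-(δ ^ 2 / (2 + δ)) * n * p) := by
  have hq0 : (0:ℝ) ≤ 1 - p := by linarith
  set a : ℝ := (1 + δ) * n * p with ha
  set c : ℝ := 1 + δ with hc
  have hc1 : (1:ℝ) < c := by simp [hc]; linarith
  have hc0 : (0:ℝ) < c := by linarith
  have ha0 : (0:ℝ) ≤ a := by
    have : (0:ℝ) ≤ (n:ℝ) := Nat.cast_nonneg n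
    rw [ha]; positivity
  -- Step 1: termwise bound by exponential tilt
  have step1 : (∑ k ∈ Finset.range (n + 1),
        if ((k : ℝ) > (1 + δ) * n * p) then (n.choose k : ℝ) * p ^ k * (1 - p) ^ (n - k) else 0)
      ≤ ∑ k ∈ Finset.range (n + 1),
        c ^ (-a) * ((c * p) ^ k * (1 - p) ^ (n - k) * (n.choose k : ℝ)) := by
    apply Finset.sum_le_sum
    intro k hk
    have hT : (0:ℝ) ≤ (n.choose k : ℝ) * p ^ k * (1 - p) ^ (n - k) := by positivity
    by_cases h : ((k : ℝ) > (1 + δ) * n * p)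
    · rw [if_pos h]
      have hka : (0:ℝ) ≤ (k:ℝ) - a := by rw [ha, hc]; linarith [h]
      have h1 : (1:ℝ) ≤ c ^ ((k:ℝ) - a) := by
        calc (1:ℝ) = c ^ (0:ℝ) := by rw [Real.rpow_zero]
        _ ≤ c ^ ((k:ℝ) - a) := Real.rpow_le_rpow_of_exponent_le hc1.le hka
      have h2 : c ^ ((k:ℝ) - a) = c ^ (-a) * c ^ k := by
        rw [sub_eq_add_neg, add_comm, Real.rpow_add hc0, Real.rpow_natCast]
      calc (n.choose k : ℝ) * p ^ k * (1 - p) ^ (n - k)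
          ≤ c ^ ((k:ℝ) - a) * ((n.choose k : ℝ) * p ^ k * (1 - p) ^ (n - k)) := by
            nlinarith [hT, h1]
        _ = c ^ (-a) * ((c * p) ^ k * (1 - p) ^ (n - k) * (n.choose k : ℝ)) := by
            rw [h2, mul_pow]; ring
    · rw [if_neg h]
      have : (0:ℝ) ≤ c ^ (-a) := (Real.rpow_pos_of_pos hc0 _).le
      have hcp : (0:ℝ) ≤ (c*p)^k * (1-p)^(n-k) * (n.choose k : ℝ) := by positivity
      positivity
  -- Step 2: binomial theorem
  have step2 : (∑ k ∈ Finset.range (n + 1),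
        c ^ (-a) * ((c * p) ^ k * (1 - p) ^ (n - k) * (n.choose k : ℝ)))
      = c ^ (-a) * (c * p + (1 - p)) ^ n := by
    rw [← Finset.mul_sum, add_pow]
  -- Step 3: bound the MGF
  have step3 : (c * p + (1 - p)) ^ n ≤ Real.exp ((n:ℝ) * (p * δ)) := by
    have h1 : c * p + (1 - p) = 1 + p * δ := by rw [hc]; ring
    have h2 : 1 + p * δ ≤ Real.exp (p * δ) := by
      have := Real.add_one_le_exp (p * δ); linarith
    rw [h1, Real.exp_nat_mul]
    exact pow_le_pow_left₀ (by positivity) h2 n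
  -- Combine
  have hfin : c ^ (-a) * Real.exp ((n:ℝ) * (p * δ))
      ≤ Real.exp (-(δ ^ 2 / (2 + δ)) * n * p) := by
    rw [Real.rpow_def_of_pos hc0, ← Real.exp_add, Real.exp_le_exp]
    have hL := key_log δ hδ.le
    have h2d : (0:ℝ) < 2 + δ := by linarith
    have hL' : 2*δ ≤ Real.log (1+δ) * (2+δ) := by
      rw [div_le_iff₀ h2d] at hL; linarith
    have hm : (0:ℝ) ≤ (n:ℝ) * p := by positivity
    have hmain : δ + δ^2/(2+δ) ≤ (1+δ) * Real.log (1+δ) := by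
      have he : δ + δ^2/(2+δ) = 2*δ*(1+δ)/(2+δ) := by field_simp; ring
      rw [he, div_le_iff₀ h2d]
      nlinarith [hL', hδ.le]
    have hmul := mul_le_mul_of_nonneg_left hmain hm
    have e1 : Real.log c * -a + (n:ℝ) * (p * δ)
        = (n:ℝ) * p * δ - (n:ℝ) * p * ((1+δ) * Real.log (1+δ)) := by
      rw [ha, hc]; ring
    have e2 : -(δ ^ 2 / (2 + δ)) * n * p
        = (n:ℝ) * p * δ - (n:ℝ) * p * (δ + δ^2/(2+δ)) := by ring
    rw [e1, e2]
    linarith [hmul]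
  calc _ ≤ _ := step1
    _ = _ := step2
    _ ≤ c ^ (-a) * Real.exp ((n:ℝ) * (p * δ)) := by
        exact mul_le_mul_of_nonneg_left step3 (Real.rpow_pos_of_pos hc0 _).le
    _ ≤ _ := hfin
end

section
/- Let G be a digraph, P a directed path in G, R the set of vertices of G related to P, and 0 ≤ t ≤ |R| an integer. Let S be a uniformly random subset of R with |S| = t, used as the shortcutter set to form the label partition V_1, …, V_{ℓ'}. Then one can choose, as a function of S, subpaths P_1, …, P_{t+1} of P (each a contiguous, possibly empty, subsequence of P) and indices f(1), …, f(t+1) such that: (1) if S contains a bridge of P then every P_i is empty; (2) if S contains no bridge of P then the P_i are pairwise vertex-disjoint and their concatenation is all of P; (3) every nonempty P_i has all its vertices in the class V_{f(i)}. Moreover, E[ Σ_{i=1}^{t+1} s(P_i, G[V_{f(i)}]) ] ≤ (2/(t+1))·s(P, G), where s(P_i, G[V_{f(i)}]) is the number of vertices of the induced subgraph G[V_{f(i)}] related to P_i within that subgraph (taken to be 0 when P_i is empty). -/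
/-- `HasPathIn E C n u v` : there is a directed path with exactly `n` edges
from `u` to `v`, all of whose vertices lie in `C` (reachability through the
induced subgraph `G[C]`). -/
def HasPathIn {V : Type} (E : V → V → Prop) (C : Set V) : ℕ → V → V → Prop
  | 0, u, v => u = v ∧ u ∈ C
  | n + 1, u, v => u ∈ C ∧ ∃ w, E u w ∧ HasPathIn E C n w v

/-- Reachability within the induced subgraph `G[C]`. -/
def ReachIn {V : Type} (E : V → V → Prop) (C : Set V) (u v : V) : Prop :=
  ∃ n, HasPathIn E C n u v

/-- `w` receives no `✗` label from the shortcutter set `S`: no `v ∈ S` is in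
the same strongly connected component as `w`. -/
def NoX {V : Type} (E : V → V → Prop) (S : Finset V) (w : V) : Prop :=
  ∀ v ∈ S, ¬ (Reach E v w ∧ Reach E w v)

/-- `w` and `w'` receive exactly the same labels from the shortcutter set `S`
(for vertices with no `✗` label, this is equivalent to having the same
reachability relations to each `v ∈ S`). -/
def SameLabels {V : Type} (E : V → V → Prop) (S : Finset V) (w w' : V) : Prop :=
  ∀ v ∈ S, (Reach E v w ↔ Reach E v w') ∧ (Reach E w v ↔ Reach E w' v)

/-- `v` is a bridge of the path `⟨P 0, …, P ℓ⟩`: `v_0 ⪯ v` and `v ⪯ v_ℓ`. -/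
def IsBridge {V : Type} (E : V → V → Prop) (ℓ : ℕ) (P : ℕ → V) (v : V) : Prop :=
  Reach E (P 0) v ∧ Reach E v (P ℓ)

open Classical in
/-- The set `R` of vertices of `G` related to the path `⟨P 0, …, P ℓ⟩`;
`s(P, G)` is its cardinality. -/
noncomputable def relSet {V : Type} [Fintype V] (E : V → V → Prop) (ℓ : ℕ)
    (P : ℕ → V) : Finset V :=
  Finset.univ.filter (fun v => ∃ i ≤ ℓ, Reach E v (P i) ∨ Reach E (P i) v)

/-- `sVal E P S I` is `s(P_I, G[V_{f(I)}])`: for a subpath of `P` given by an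
index set `I` all of whose vertices lie in a single label class `V_{f(I)}` of
the shortcutter set `S`, this is the number of vertices of the induced
subgraph `G[V_{f(I)}]` related to the subpath within that subgraph (it is `0`
when `I` is empty). -/
noncomputable def sVal {V : Type} [Fintype V] (E : V → V → Prop) (P : ℕ → V)
    (S : Finset V) (I : Finset ℕ) : ℕ :=
  let cl : Set V := {x : V | NoX E S x ∧ ∀ j ∈ I, SameLabels E S (P j) x}
  Set.ncard {x : V | x ∈ cl ∧ ∃ j ∈ I, (ReachIn E cl x (P j) ∨ ReachIn E cl (P j) x)}


set_option linter.unusedSectionVars false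

section AuxStmt3

open Classical Finset

variable {V : Type} (E : V → V → Prop)

lemma hasPath_trans {n m : ℕ} {u v w : V} (h1 : HasPath E n u v)
    (h2 : HasPath E m v w) : HasPath E (n + m) u w := by
  induction n generalizing u with
  | zero =>
      have h1' : u = v := h1
      subst h1'; simpa using h2
  | succ n ih =>
      obtain ⟨z, hz, hp⟩ := h1
      rw [show n + 1 + m = (n + m) + 1 by omega]
      exact ⟨z, hz, ih hp⟩

lemma reach_refl (u : V) : Reach E u u := ⟨0, rfl⟩

lemma reach_trans {u v w : V} (h1 : Reach E u v) (h2 : Reach E v w) :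
    Reach E u w := by
  obtain ⟨n, h1⟩ := h1; obtain ⟨m, h2⟩ := h2
  exact ⟨n + m, hasPath_trans E h1 h2⟩

lemma hasPathIn_hasPath {C : Set V} {n : ℕ} {u v : V} (h : HasPathIn E C n u v) :
    HasPath E n u v := by
  induction n generalizing u with
  | zero => exact h.1
  | succ n ih =>
      obtain ⟨hu, z, hz, hp⟩ := h
      exact ⟨z, hz, ih hp⟩

lemma reachIn_reach {C : Set V} {u v : V} (h : ReachIn E C u v) : Reach E u v := by
  obtain ⟨n, h⟩ := h; exact ⟨n, hasPathIn_hasPath E h⟩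

variable (ℓ : ℕ) (P : ℕ → V)

lemma reach_path (hP : ∀ i < ℓ, E (P i) (P (i + 1))) {j j' : ℕ}
    (h : j ≤ j') (h' : j' ≤ ℓ) : Reach E (P j) (P j') := by
  induction j' with
  | zero => exact Nat.le_zero.mp h ▸ reach_refl E _
  | succ m ih =>
      rcases Nat.eq_or_lt_of_le h with he | hl
      · exact he ▸ reach_refl E _
      · exact reach_trans E (ih (by omega) (by omega))
          ⟨1, P (m + 1), hP m (by omega), rfl⟩

end AuxStmt3
section AuxStmt3b

open Classical Finset

variable {V : Type} (E : V → V → Prop) (ℓ : ℕ) (P : ℕ → V)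

/-- the (capped) breakpoint of shortcutter `v` along the path -/
noncomputable def cB (v : V) : ℕ :=
  if h : ∃ j, j ≤ ℓ ∧ Reach E v (P j) then Nat.find h
  else if h' : ∃ j, ¬ Reach E (P j) v then min (Nat.find h') (ℓ + 1) else ℓ + 1

lemma cB_le (v : V) : cB E ℓ P v ≤ ℓ + 1 := by
  unfold cB
  split_ifs with h h'
  · exact le_trans (Nat.find_spec h).1 (Nat.le_succ _)
  · exact min_le_right _ _
  · exact le_rfl

lemma label_eq (hP : ∀ i < ℓ, E (P i) (P (i + 1))) {v : V}
    (hnb : ¬ IsBridge E ℓ P v) {j j' : ℕ} (hjj : j ≤ j') (hj' : j' ≤ ℓ)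
    (hc : cB E ℓ P v ≤ j ∨ j' < cB E ℓ P v) :
    (Reach E v (P j) ↔ Reach E v (P j')) ∧
      (Reach E (P j) v ↔ Reach E (P j') v) := by
  unfold cB at hc
  by_cases h : ∃ k, k ≤ ℓ ∧ Reach E v (P k)
  · rw [dif_pos h] at hc
    have hfind := Nat.find_spec h
    constructor
    · rcases hc with hc | hc
      · exact iff_of_true
          (reach_trans E hfind.2 (reach_path E ℓ P hP hc (le_trans hjj hj')))
          (reach_trans E hfind.2 (reach_path E ℓ P hP (le_trans hc hjj) hj'))
      · refine iff_of_false (fun hr => ?_) (fun hr => ?_)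
        · exact absurd (Nat.find_min' h ⟨le_trans hjj hj', hr⟩) (by omega)
        · exact absurd (Nat.find_min' h ⟨hj', hr⟩) (by omega)
    · refine iff_of_false (fun hr => hnb ?_) (fun hr => hnb ?_)
      · exact ⟨reach_trans E (reach_path E ℓ P hP (Nat.zero_le j) (le_trans hjj hj')) hr,
          reach_trans E hfind.2 (reach_path E ℓ P hP hfind.1 le_rfl)⟩
      · exact ⟨reach_trans E (reach_path E ℓ P hP (Nat.zero_le j') hj') hr,
          reach_trans E hfind.2 (reach_path E ℓ P hP hfind.1 le_rfl)⟩
  · rw [dif_neg h] at hc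
    push_neg at h
    refine ⟨iff_of_false (h j (le_trans hjj hj')) (h j' hj'), ?_⟩
    by_cases h' : ∃ k, ¬ Reach E (P k) v
    · rw [dif_pos h'] at hc
      have hfind := Nat.find_spec h'
      rcases hc with hc | hc
      · have hfj : Nat.find h' ≤ j := by
          rcases min_le_iff.mp hc with h1 | h1
          · exact h1
          · omega
        refine iff_of_false (fun hr => hfind ?_) (fun hr => hfind ?_)
        · exact reach_trans E (reach_path E ℓ P hP hfj (le_trans hjj hj')) hr
        · exact reach_trans E (reach_path E ℓ P hP (le_trans hfj hjj) hj') hr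
      · have hfj : j' < Nat.find h' := lt_of_lt_of_le hc (min_le_left _ _)
        exact iff_of_true (not_not.mp (Nat.find_min h' (by omega)))
          (not_not.mp (Nat.find_min h' hfj))
    · push_neg at h'
      exact iff_of_true (h' j) (h' j')

lemma label_ne (hP : ∀ i < ℓ, E (P i) (P (i + 1))) {v : V} {j j' : ℕ}
    (h1 : j < cB E ℓ P v) (h2 : cB E ℓ P v ≤ j') (hj' : j' ≤ ℓ) :
    ¬ ((Reach E v (P j) ↔ Reach E v (P j')) ∧
        (Reach E (P j) v ↔ Reach E (P j') v)) := by
  unfold cB at h1 h2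
  by_cases h : ∃ k, k ≤ ℓ ∧ Reach E v (P k)
  · rw [dif_pos h] at h1 h2
    have hfind := Nat.find_spec h
    intro ⟨hf, _⟩
    have hvj' : Reach E v (P j') :=
      reach_trans E hfind.2 (reach_path E ℓ P hP h2 hj')
    exact absurd (Nat.find_min' h ⟨by omega, hf.mpr hvj'⟩) (by omega)
  · rw [dif_neg h] at h1 h2
    by_cases h' : ∃ k, ¬ Reach E (P k) v
    · rw [dif_pos h'] at h1 h2
      have hfind := Nat.find_spec h'
      have hfj' : Nat.find h' ≤ j' := by
        rcases min_le_iff.mp h2 with hh | hh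
        · exact hh
        · omega
      have hjf : j < Nat.find h' := lt_of_lt_of_le h1 (min_le_left _ _)
      intro ⟨_, hs⟩
      exact hfind (reach_trans E (reach_path E ℓ P hP hfj' hj')
        (hs.mp (not_not.mp (Nat.find_min h' hjf))))
    · rw [dif_neg h'] at h2
      omega


end AuxStmt3b
section AuxStmt3c

open Classical Finset

variable {V : Type} (E : V → V → Prop) (ℓ : ℕ) (P : ℕ → V)

/-- sorted list of breakpoints of the shortcutters -/
noncomputable def midL (S : Finset V) : List ℕ :=
  (S.val.map (cB E ℓ P)).sort (· ≤ ·)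

lemma midL_sorted (S : Finset V) : (midL E ℓ P S).Pairwise (· ≤ ·) :=
  Multiset.pairwise_sort _ _

lemma midL_length (S : Finset V) : (midL E ℓ P S).length = S.card := by
  rw [midL, Multiset.length_sort, Multiset.card_map]; rfl

lemma midL_le {S : Finset V} {x : ℕ} (hx : x ∈ midL E ℓ P S) : x ≤ ℓ + 1 := by
  rw [midL, Multiset.mem_sort, Multiset.mem_map] at hx
  obtain ⟨v, _, rfl⟩ := hx
  exact cB_le E ℓ P v

/-- the `k`-th endpoint of the interval decomposition -/
noncomputable def dF (S : Finset V) (k : ℕ) : ℕ :=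
  if k = 0 then 0 else (midL E ℓ P S).getD (k - 1) (ℓ + 1)

lemma dF_zero (S : Finset V) : dF E ℓ P S 0 = 0 := by simp [dF]

lemma dF_le (S : Finset V) (k : ℕ) : dF E ℓ P S k ≤ ℓ + 1 := by
  unfold dF
  split_ifs with h
  · omega
  · by_cases hk : k - 1 < (midL E ℓ P S).length
    · rw [List.getD_eq_getElem _ _ hk]
      exact midL_le E ℓ P (List.getElem_mem hk)
    · rw [List.getD_eq_default _ _ (by omega)]

lemma dF_mono (S : Finset V) : Monotone (dF E ℓ P S) := by
  intro a b hab
  unfold dF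
  split_ifs with ha hb hb
  · exact le_rfl
  · exact Nat.zero_le _
  · omega
  · by_cases h2 : b - 1 < (midL E ℓ P S).length
    · have h1 : a - 1 < (midL E ℓ P S).length := by omega
      rw [List.getD_eq_getElem _ _ h1, List.getD_eq_getElem _ _ h2]
      exact (midL_sorted E ℓ P S).rel_get_of_le
        (a := ⟨a - 1, h1⟩) (b := ⟨b - 1, h2⟩) (by simp; omega)
    · have hb' : (midL E ℓ P S).getD (b - 1) (ℓ + 1) = ℓ + 1 :=
        List.getD_eq_default _ _ (by omega)
      rw [hb']
      by_cases h1 : a - 1 < (midL E ℓ P S).length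
      · rw [List.getD_eq_getElem _ _ h1]
        exact midL_le E ℓ P (List.getElem_mem h1)
      · rw [List.getD_eq_default _ _ (by omega)]

lemma dF_last (S : Finset V) : dF E ℓ P S (S.card + 1) = ℓ + 1 := by
  unfold dF
  rw [if_neg (by omega), List.getD_eq_default _ _ (by rw [midL_length]; omega)]

lemma dF_mem {S : Finset V} {v : V} (hv : v ∈ S) :
    ∃ k, 1 ≤ k ∧ k ≤ S.card ∧ dF E ℓ P S k = cB E ℓ P v := by
  have hmem : cB E ℓ P v ∈ midL E ℓ P S := by
    rw [midL, Multiset.mem_sort, Multiset.mem_map]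
    exact ⟨v, hv, rfl⟩
  obtain ⟨m, hm, he⟩ := List.mem_iff_getElem.mp hmem
  refine ⟨m + 1, by omega, by rw [← midL_length E ℓ P S]; omega, ?_⟩
  rw [dF, if_neg (by omega)]
  simpa using (List.getD_eq_getElem _ (ℓ+1) (by simpa using hm)).trans he

lemma mem_dF {S : Finset V} {k : ℕ} (hk1 : 1 ≤ k) (hk2 : k ≤ S.card) :
    ∃ v ∈ S, cB E ℓ P v = dF E ℓ P S k := by
  have hlt : k - 1 < (midL E ℓ P S).length := by rw [midL_length]; omega
  have hmem : (midL E ℓ P S)[k-1] ∈ midL E ℓ P S := List.getElem_mem hlt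
  have hmem' : (midL E ℓ P S)[k-1] ∈ S.val.map (cB E ℓ P) :=
    (Multiset.mem_sort (α := ℕ) (· ≤ ·)).mp hmem
  obtain ⟨v, hv, he⟩ := Multiset.mem_map.mp hmem'
  refine ⟨v, hv, ?_⟩
  rw [dF, if_neg (by omega), List.getD_eq_getElem _ _ hlt, he]

end AuxStmt3c
section AuxStmt3d

open Classical Finset

variable {V : Type} (E : V → V → Prop) (ℓ : ℕ) (P : ℕ → V)

/-- the interval decomposition produced by the shortcutter set `S` -/
noncomputable def Ifun (S : Finset V) (i : ℕ) : Finset ℕ :=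
  if ∃ v ∈ S, IsBridge E ℓ P v then ∅
  else Finset.Ico (dF E ℓ P S i) (dF E ℓ P S (i + 1))

lemma Ifun_icc (S : Finset V) (i : ℕ) : ∃ a b, Ifun E ℓ P S i = Finset.Icc a b := by
  unfold Ifun
  split_ifs with h
  · exact ⟨1, 0, by simp⟩
  · rcases Nat.eq_zero_or_pos (dF E ℓ P S (i + 1)) with h0 | h0
    · exact ⟨1, 0, by rw [h0]; simp⟩
    · obtain ⟨b, hb⟩ := Nat.exists_eq_add_of_lt h0
      exact ⟨dF E ℓ P S i, b, by
        rw [hb, show 0 + b + 1 = b + 1 by omega, Finset.Ico_add_one_right_eq_Icc]⟩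

lemma Ifun_bridge {S : Finset V} (h : ∃ v ∈ S, IsBridge E ℓ P v) (i : ℕ) :
    Ifun E ℓ P S i = ∅ := if_pos h

lemma Ifun_nb {S : Finset V} (h : ¬ ∃ v ∈ S, IsBridge E ℓ P v) (i : ℕ) :
    Ifun E ℓ P S i = Finset.Ico (dF E ℓ P S i) (dF E ℓ P S (i + 1)) := if_neg h

lemma mem_Ifun {S : Finset V} {i j : ℕ} (hj : j ∈ Ifun E ℓ P S i) :
    (¬ ∃ v ∈ S, IsBridge E ℓ P v) ∧ dF E ℓ P S i ≤ j ∧ j < dF E ℓ P S (i + 1)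
      ∧ j ≤ ℓ := by
  by_cases h : ∃ v ∈ S, IsBridge E ℓ P v
  · rw [Ifun_bridge E ℓ P h] at hj; simp at hj
  · rw [Ifun_nb E ℓ P h, Finset.mem_Ico] at hj
    have := dF_le E ℓ P S (i + 1)
    exact ⟨h, hj.1, hj.2, by omega⟩

lemma Ifun_noX (hP : ∀ i < ℓ, E (P i) (P (i + 1))) {S : Finset V} {i j : ℕ}
    (hj : j ∈ Ifun E ℓ P S i) : NoX E S (P j) := by
  obtain ⟨hnb, _, _, hjl⟩ := mem_Ifun E ℓ P hj
  intro v hv ⟨h1, h2⟩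
  exact hnb ⟨v, hv, reach_trans E (reach_path E ℓ P hP (Nat.zero_le j) hjl) h2,
    reach_trans E h1 (reach_path E ℓ P hP hjl le_rfl)⟩

lemma Ifun_same_core (hP : ∀ i < ℓ, E (P i) (P (i + 1))) {S : Finset V} {i j j' : ℕ}
    (hj : j ∈ Ifun E ℓ P S i) (hj' : j' ∈ Ifun E ℓ P S i) (hjj : j ≤ j') :
    SameLabels E S (P j) (P j') := by
  obtain ⟨hnb, hj1, hj2, hjl⟩ := mem_Ifun E ℓ P hj
  obtain ⟨-, hj'1, hj'2, hj'l⟩ := mem_Ifun E ℓ P hj'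
  intro v hv
  obtain ⟨k, hk1, hk2, hkd⟩ := dF_mem E ℓ P hv
  have hnbv : ¬ IsBridge E ℓ P v := fun hb => hnb ⟨v, hv, hb⟩
  refine label_eq E ℓ P hP hnbv hjj hj'l ?_
  rcases le_or_gt k i with hki | hki
  · left; rw [← hkd]; exact le_trans (dF_mono E ℓ P S hki) hj1
  · right; rw [← hkd]; exact lt_of_lt_of_le hj'2 (dF_mono E ℓ P S hki)

lemma Ifun_same (hP : ∀ i < ℓ, E (P i) (P (i + 1))) {S : Finset V} {i j j' : ℕ}
    (hj : j ∈ Ifun E ℓ P S i) (hj' : j' ∈ Ifun E ℓ P S i) :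
    SameLabels E S (P j) (P j') := by
  rcases le_total j j' with h | h
  · exact Ifun_same_core E ℓ P hP hj hj' h
  · intro v hv
    obtain ⟨h1, h2⟩ := Ifun_same_core E ℓ P hP hj' hj h v hv
    exact ⟨h1.symm, h2.symm⟩

lemma Ifun_cross (hP : ∀ i < ℓ, E (P i) (P (i + 1))) {S : Finset V} {i i' j j' : ℕ}
    (hii' : i < i') (hi' : i' ≤ S.card) (hj : j ∈ Ifun E ℓ P S i)
    (hj' : j' ∈ Ifun E ℓ P S i') : ¬ SameLabels E S (P j) (P j') := by
  obtain ⟨hnb, hj1, hj2, hjl⟩ := mem_Ifun E ℓ P hj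
  obtain ⟨-, hj'1, hj'2, hj'l⟩ := mem_Ifun E ℓ P hj'
  obtain ⟨v, hv, hcv⟩ := mem_dF E ℓ P (S := S) (k := i + 1) (by omega) (by omega)
  intro hsame
  refine label_ne E ℓ P hP (v := v) (j := j) (j' := j')
    ?_ ?_ hj'l (hsame v hv)
  · rw [hcv]; exact hj2
  · rw [hcv]; exact le_trans (dF_mono E ℓ P S (by omega : i + 1 ≤ i')) hj'1

lemma Ifun_disj {S : Finset V} {i i' : ℕ} (hii' : i ≠ i') :
    Disjoint (Ifun E ℓ P S i) (Ifun E ℓ P S i') := by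
  rw [Finset.disjoint_left]
  intro a ha ha'
  obtain ⟨-, h1, h2, -⟩ := mem_Ifun E ℓ P ha
  obtain ⟨-, h1', h2', -⟩ := mem_Ifun E ℓ P ha'
  rcases lt_or_gt_of_ne hii' with h | h
  · have := dF_mono E ℓ P S (show i + 1 ≤ i' by omega); omega
  · have := dF_mono E ℓ P S (show i' + 1 ≤ i by omega); omega

lemma exists_step {f : ℕ → ℕ} {n : ℕ} : ∀ {m : ℕ}, f 0 ≤ n → n < f m →
    ∃ i < m, f i ≤ n ∧ n < f (i + 1) := by
  intro m
  induction m with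
  | zero => intro h0 hm; omega
  | succ m ih =>
      intro h0 hm
      by_cases h : f m ≤ n
      · exact ⟨m, by omega, h, hm⟩
      · obtain ⟨i, hi, h1, h2⟩ := ih h0 (by omega)
        exact ⟨i, by omega, h1, h2⟩

lemma Ifun_cover {S : Finset V} {t : ℕ} (hnb : ¬ ∃ v ∈ S, IsBridge E ℓ P v)
    (hS : S.card = t) :
    Finset.univ.biUnion (fun i : Fin (t + 1) => Ifun E ℓ P S i.val)
      = Finset.range (ℓ + 1) := by
  ext n
  simp only [Finset.mem_biUnion, Finset.mem_univ, true_and, Finset.mem_range,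
    Ifun_nb E ℓ P hnb, Finset.mem_Ico]
  constructor
  · rintro ⟨i, h1, h2⟩
    have := dF_le E ℓ P S (i.val + 1); omega
  · intro hn
    have h0 : dF E ℓ P S 0 ≤ n := by rw [dF_zero]; omega
    have hm : n < dF E ℓ P S (t + 1) := by
      rw [← hS, dF_last]; omega
    obtain ⟨i, hi, ha, hb⟩ := exists_step h0 hm
    exact ⟨⟨i, hi⟩, ha, hb⟩

end AuxStmt3d
section AuxStmt3e

open Classical Finset

variable {V : Type} [Fintype V] (E : V → V → Prop) (ℓ : ℕ) (P : ℕ → V)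

/-- the label class of the (indices in) `I0`. -/
def clS (S : Finset V) (I0 : Finset ℕ) : Set V :=
  {x : V | NoX E S x ∧ ∀ j ∈ I0, SameLabels E S (P j) x}

lemma clS_not_mem {S : Finset V} {I0 : Finset ℕ} {x : V}
    (h : x ∈ clS E P S I0) : x ∉ S :=
  fun hx => (h.1 x hx) ⟨reach_refl E x, reach_refl E x⟩

lemma same_trans {S : Finset V} {a b x : V} (h1 : SameLabels E S a x)
    (h2 : SameLabels E S b x) : SameLabels E S a b :=
  fun v hv => ⟨(h1 v hv).1.trans (h2 v hv).1.symm, (h1 v hv).2.trans (h2 v hv).2.symm⟩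

lemma sVal_le (S : Finset V) (I0 : Finset ℕ) :
    sVal E P S I0 ≤
      (Finset.univ.filter (fun x => x ∈ clS E P S I0 ∧
          ∃ j ∈ I0, ReachIn E (clS E P S I0) x (P j))).card +
      (Finset.univ.filter (fun x => x ∈ clS E P S I0 ∧
          ∃ j ∈ I0, ReachIn E (clS E P S I0) (P j) x)).card := by
  have h1 : sVal E P S I0 = Set.ncard {x : V | x ∈ clS E P S I0 ∧
      ∃ j ∈ I0, (ReachIn E (clS E P S I0) x (P j) ∨
        ReachIn E (clS E P S I0) (P j) x)} := rfl
  have h2 : {x : V | x ∈ clS E P S I0 ∧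
      ∃ j ∈ I0, (ReachIn E (clS E P S I0) x (P j) ∨
        ReachIn E (clS E P S I0) (P j) x)} =
      ↑((Finset.univ.filter (fun x => x ∈ clS E P S I0 ∧
          ∃ j ∈ I0, ReachIn E (clS E P S I0) x (P j))) ∪
        (Finset.univ.filter (fun x => x ∈ clS E P S I0 ∧
          ∃ j ∈ I0, ReachIn E (clS E P S I0) (P j) x))) := by
    ext x
    simp only [Set.mem_setOf_eq, Finset.coe_union, Set.mem_union, Finset.mem_coe,
      Finset.mem_filter, Finset.mem_univ, true_and]
    constructor
    · rintro ⟨hcl, j, hj, hr | hr⟩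
      · exact Or.inl ⟨hcl, j, hj, hr⟩
      · exact Or.inr ⟨hcl, j, hj, hr⟩
    · rintro (⟨hcl, j, hj, hr⟩ | ⟨hcl, j, hj, hr⟩)
      · exact ⟨hcl, j, hj, Or.inl hr⟩
      · exact ⟨hcl, j, hj, Or.inr hr⟩
  rw [h1, h2, Set.ncard_coe_finset]
  exact Finset.card_union_le _ _

/-- uniqueness in the `x = x'` case -/
lemma uniq_eq_case (hP : ∀ i < ℓ, E (P i) (P (i + 1))) {S : Finset V}
    {i i' j j' : ℕ} (hi : i ≤ S.card) (hi' : i' ≤ S.card) {x : V}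
    (hx : x ∈ clS E P S (Ifun E ℓ P S i))
    (hx' : x ∈ clS E P S (Ifun E ℓ P S i'))
    (hj : j ∈ Ifun E ℓ P S i) (hj' : j' ∈ Ifun E ℓ P S i') : i = i' := by
  by_contra hii
  have s1 : SameLabels E S (P j) x := hx.2 j hj
  have s1' : SameLabels E S (P j') x := hx'.2 j' hj'
  rcases lt_or_gt_of_ne hii with h | h
  · exact Ifun_cross E ℓ P hP h hi' hj hj' (same_trans E s1 s1')
  · exact Ifun_cross E ℓ P hP h hi hj' hj (same_trans E s1' s1)

lemma stmt3_insert_eq_self {S S' : Finset V} {x : V} (hx : x ∉ S) (hx' : x ∉ S')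
    (he : insert x S = insert x S') : S = S' := by
  rw [← Finset.erase_insert hx, ← Finset.erase_insert hx', he]

lemma stmt3_mem_of_insert_ne {S S' : Finset V} {x x' : V} (hxx : x ≠ x')
    (he : insert x S = insert x' S') : x' ∈ S := by
  have := Finset.mem_insert_self x' S'
  rw [← he] at this
  rcases Finset.mem_insert.mp this with h | h
  · exact absurd h.symm hxx
  · exact h

lemma uniqD (hP : ∀ i < ℓ, E (P i) (P (i + 1))) {S S' : Finset V}
    {i i' : ℕ} (hi : i ≤ S.card) (hi' : i' ≤ S'.card) {x x' : V}
    (hx : x ∈ clS E P S (Ifun E ℓ P S i) ∧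
      ∃ j ∈ Ifun E ℓ P S i, ReachIn E (clS E P S (Ifun E ℓ P S i)) x (P j))
    (hx' : x' ∈ clS E P S' (Ifun E ℓ P S' i') ∧
      ∃ j ∈ Ifun E ℓ P S' i', ReachIn E (clS E P S' (Ifun E ℓ P S' i')) x' (P j))
    (he : insert x S = insert x' S') : S = S' ∧ i = i' ∧ x = x' := by
  obtain ⟨j, hj, hrIn⟩ := hx.2
  obtain ⟨j', hj', hrIn'⟩ := hx'.2
  have hRxj : Reach E x (P j) := reachIn_reach E hrIn
  have hRx'j' : Reach E x' (P j') := reachIn_reach E hrIn'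
  obtain ⟨hnb, -, -, hjl⟩ := mem_Ifun E ℓ P hj
  obtain ⟨hnb', -, -, hj'l⟩ := mem_Ifun E ℓ P hj'
  by_cases hxx : x = x'
  · subst hxx
    have hSS : S = S' := stmt3_insert_eq_self
      (clS_not_mem E P hx.1) (clS_not_mem E P hx'.1) he
    subst hSS
    exact ⟨rfl, uniq_eq_case E ℓ P hP hi hi' hx.1 hx'.1 hj hj', rfl⟩
  · exfalso
    have hx'S : x' ∈ S := stmt3_mem_of_insert_ne hxx he
    have hxS' : x ∈ S' := stmt3_mem_of_insert_ne (Ne.symm hxx) he.symm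
    have c1 := hx.1.2 j hj x' hx'S
    have c2 := hx'.1.2 j' hj' x hxS'
    rcases le_total j j' with hjj | hjj
    · have hxPj' : Reach E x (P j') :=
        reach_trans E hRxj (reach_path E ℓ P hP hjj hj'l)
      have hxx2 : Reach E x x' := c2.1.mp hxPj'
      have hPjx' : Reach E (P j) x' := c1.2.mpr hxx2
      exact hnb ⟨x', hx'S,
        reach_trans E (reach_path E ℓ P hP (Nat.zero_le j) hjl) hPjx',
        reach_trans E hRx'j' (reach_path E ℓ P hP hj'l le_rfl)⟩
    · have hx'Pj : Reach E x' (P j) :=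
        reach_trans E hRx'j' (reach_path E ℓ P hP hjj hjl)
      have hx'x : Reach E x' x := c1.1.mp hx'Pj
      have hPj'x : Reach E (P j') x := c2.2.mpr hx'x
      exact hnb' ⟨x, hxS',
        reach_trans E (reach_path E ℓ P hP (Nat.zero_le j') hj'l) hPj'x,
        reach_trans E hRxj (reach_path E ℓ P hP hjl le_rfl)⟩

lemma uniqA (hP : ∀ i < ℓ, E (P i) (P (i + 1))) {S S' : Finset V}
    {i i' : ℕ} (hi : i ≤ S.card) (hi' : i' ≤ S'.card) {x x' : V}
    (hx : x ∈ clS E P S (Ifun E ℓ P S i) ∧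
      ∃ j ∈ Ifun E ℓ P S i, ReachIn E (clS E P S (Ifun E ℓ P S i)) (P j) x)
    (hx' : x' ∈ clS E P S' (Ifun E ℓ P S' i') ∧
      ∃ j ∈ Ifun E ℓ P S' i', ReachIn E (clS E P S' (Ifun E ℓ P S' i')) (P j) x')
    (he : insert x S = insert x' S') : S = S' ∧ i = i' ∧ x = x' := by
  obtain ⟨j, hj, hrIn⟩ := hx.2
  obtain ⟨j', hj', hrIn'⟩ := hx'.2
  have hRjx : Reach E (P j) x := reachIn_reach E hrIn
  have hRj'x' : Reach E (P j') x' := reachIn_reach E hrIn'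
  obtain ⟨hnb, -, -, hjl⟩ := mem_Ifun E ℓ P hj
  obtain ⟨hnb', -, -, hj'l⟩ := mem_Ifun E ℓ P hj'
  by_cases hxx : x = x'
  · subst hxx
    have hSS : S = S' := stmt3_insert_eq_self
      (clS_not_mem E P hx.1) (clS_not_mem E P hx'.1) he
    subst hSS
    exact ⟨rfl, uniq_eq_case E ℓ P hP hi hi' hx.1 hx'.1 hj hj', rfl⟩
  · exfalso
    have hx'S : x' ∈ S := stmt3_mem_of_insert_ne hxx he
    have hxS' : x ∈ S' := stmt3_mem_of_insert_ne (Ne.symm hxx) he.symm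
    have c1 := hx.1.2 j hj x' hx'S
    have c2 := hx'.1.2 j' hj' x hxS'
    rcases le_total j j' with hjj | hjj
    · have hPjx' : Reach E (P j) x' :=
        reach_trans E (reach_path E ℓ P hP hjj hj'l) hRj'x'
      have hxx2 : Reach E x x' := c1.2.mp hPjx'
      have hxPj' : Reach E x (P j') := c2.1.mpr hxx2
      exact hnb' ⟨x, hxS',
        reach_trans E (reach_path E ℓ P hP (Nat.zero_le j) hjl) hRjx,
        reach_trans E hxPj' (reach_path E ℓ P hP hj'l le_rfl)⟩
    · have hPj'x : Reach E (P j') x :=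
        reach_trans E (reach_path E ℓ P hP hjj hjl) hRjx
      have hx'x : Reach E x' x := c2.2.mp hPj'x
      have hx'Pj : Reach E x' (P j) := c1.1.mpr hx'x
      exact hnb ⟨x', hx'S,
        reach_trans E (reach_path E ℓ P hP (Nat.zero_le j') hj'l) hRj'x',
        reach_trans E hx'Pj (reach_path E ℓ P hP hjl le_rfl)⟩

end AuxStmt3e
section AuxStmt3f

open Classical Finset

set_option linter.unusedSectionVars false

lemma stmt3_total_le {α : Type} [Fintype α] [DecidableEq α] {n : ℕ}
    (A : Finset (Finset α)) (cond : Finset α → Fin n → α → Prop)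
    [inst : ∀ S i, DecidablePred (cond S i)]
    (T : Finset (Finset α))
    (hmap : ∀ S ∈ A, ∀ (i : Fin n) (x : α), cond S i x → insert x S ∈ T)
    (huniq : ∀ S ∈ A, ∀ S' ∈ A, ∀ (i i' : Fin n) (x x' : α),
      cond S i x → cond S' i' x' → insert x S = insert x' S' →
        S = S' ∧ i = i' ∧ x = x') :
    (∑ S ∈ A, ∑ i : Fin n, (Finset.univ.filter (cond S i)).card) ≤ T.card := by
  have key : (∑ S ∈ A, ∑ i : Fin n, (Finset.univ.filter (cond S i)).card)
      = ((A ×ˢ (Finset.univ : Finset (Fin n)) ×ˢ (Finset.univ : Finset α)).filter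
          (fun p => cond p.1 p.2.1 p.2.2)).card := by
    rw [Finset.card_filter, Finset.sum_product]
    refine Finset.sum_congr rfl fun S hS => ?_
    rw [Finset.sum_product]
    exact Finset.sum_congr rfl fun i _ => Finset.card_filter _ _
  rw [key]
  apply Finset.card_le_card_of_injOn (fun p => insert p.2.2 p.1)
  · intro p hp
    rw [Finset.mem_coe, Finset.mem_filter] at hp
    exact hmap _ (Finset.mem_product.mp hp.1).1 _ _ hp.2
  · intro p hp q hq he
    rw [Finset.mem_coe, Finset.mem_filter] at hp hq
    obtain ⟨h1, h2, h3⟩ := huniq _ (Finset.mem_product.mp hp.1).1 _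
      (Finset.mem_product.mp hq.1).1 _ _ _ _ hp.2 hq.2 he
    exact Prod.ext h1 (Prod.ext h2 h3)

end AuxStmt3f

open Classical in
/-- Let `P = ⟨v_0, …, v_ℓ⟩` be a directed path in a digraph `G`, `R` the set of
vertices related to `P`, and `0 ≤ t ≤ |R|`.  For a uniformly random `t`-subset
`S ⊆ R` used as the shortcutter set, one can choose (as a function of `S`)
contiguous, possibly empty, subpaths `P_1, …, P_{t+1}` of `P` such that:
(1) if `S` contains a bridge of `P` then every `P_i` is empty;
(2) if `S` contains no bridge then the `P_i` are pairwise vertex-disjoint and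
their concatenation is all of `P`;
(3) every nonempty `P_i` lies entirely in a single label class.
Moreover `E[ Σ_i s(P_i, G[V_{f(i)}]) ] ≤ (2/(t+1))·s(P, G)`. -/
theorem stmt_3 {V : Type} [Fintype V] (E : V → V → Prop) (ℓ : ℕ) (P : ℕ → V)
    (hP : ∀ i < ℓ, E (P i) (P (i + 1))) (t : ℕ) (ht : t ≤ (relSet E ℓ P).card) :
    ∃ I : Finset V → Fin (t + 1) → Finset ℕ,
      (∀ S ∈ (relSet E ℓ P).powersetCard t,
        -- each `P_i` is a contiguous (possibly empty) subsequence of `P`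
        (∀ i, ∃ a b, I S i = Finset.Icc a b) ∧
        -- (1)
        ((∃ v ∈ S, IsBridge E ℓ P v) → ∀ i, I S i = ∅) ∧
        -- (2)
        ((∀ v ∈ S, ¬ IsBridge E ℓ P v) →
          (∀ i j, i ≠ j → Disjoint (I S i) (I S j)) ∧
          Finset.univ.biUnion (I S) = Finset.range (ℓ + 1)) ∧
        -- (3) all vertices of a nonempty `P_i` lie in one label class `V_{f(i)}`
        (∀ i, ∀ j ∈ I S i, NoX E S (P j)) ∧
        (∀ i, ∀ j ∈ I S i, ∀ j' ∈ I S i, SameLabels E S (P j) (P j'))) ∧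
      (∑ S ∈ (relSet E ℓ P).powersetCard t, ∑ i : Fin (t + 1), (sVal E P S (I S i) : ℝ))
          / ((relSet E ℓ P).card.choose t : ℝ)
        ≤ (2 / ((t : ℝ) + 1)) * ((relSet E ℓ P).card : ℝ) := by
  classical
  refine ⟨fun S i => Ifun E ℓ P S i.val, ?_, ?_⟩
  · intro S hS
    obtain ⟨hsub, hcard⟩ := Finset.mem_powersetCard.mp hS
    refine ⟨fun i => Ifun_icc E ℓ P S i.val, ?_, ?_, ?_, ?_⟩
    · intro hb i; exact Ifun_bridge E ℓ P hb i.val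
    · intro hnb
      have hnb' : ¬ ∃ v ∈ S, IsBridge E ℓ P v := by
        rintro ⟨v, hv, hb⟩; exact hnb v hv hb
      exact ⟨fun i j hij => Ifun_disj E ℓ P (fun hvv => hij (Fin.val_injective hvv)),
        Ifun_cover E ℓ P hnb' hcard⟩
    · intro i j hj; exact Ifun_noX E ℓ P hP hj
    · intro i j hj j' hj'; exact Ifun_same E ℓ P hP hj hj'
  · set r := (relSet E ℓ P).card with hr
    have hDle : (∑ S ∈ (relSet E ℓ P).powersetCard t, ∑ i : Fin (t + 1),
        (Finset.univ.filter (fun x => x ∈ clS E P S (Ifun E ℓ P S i.val) ∧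
          ∃ j ∈ Ifun E ℓ P S i.val,
            ReachIn E (clS E P S (Ifun E ℓ P S i.val)) x (P j))).card)
        ≤ ((relSet E ℓ P).powersetCard (t + 1)).card := by
      refine stmt3_total_le ((relSet E ℓ P).powersetCard t)
        (fun S i x => x ∈ clS E P S (Ifun E ℓ P S i.val) ∧
          ∃ j ∈ Ifun E ℓ P S i.val,
            ReachIn E (clS E P S (Ifun E ℓ P S i.val)) x (P j))
        ((relSet E ℓ P).powersetCard (t + 1)) ?_ ?_
      · intro S hS i x hc
        obtain ⟨hsub, hcard⟩ := Finset.mem_powersetCard.mp hS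
        obtain ⟨j, hj, hrc⟩ := hc.2
        have hxR : x ∈ relSet E ℓ P := by
          rw [relSet, Finset.mem_filter]
          exact ⟨Finset.mem_univ x, j, (mem_Ifun E ℓ P hj).2.2.2,
            Or.inl (reachIn_reach E hrc)⟩
        have hxS : x ∉ S := clS_not_mem E P hc.1
        rw [Finset.mem_powersetCard]
        exact ⟨Finset.insert_subset_iff.mpr ⟨hxR, hsub⟩,
          by rw [Finset.card_insert_of_notMem hxS, hcard]⟩
      · intro S hS S' hS' i i' x x' hc hc' he
        obtain ⟨-, hcard⟩ := Finset.mem_powersetCard.mp hS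
        obtain ⟨-, hcard'⟩ := Finset.mem_powersetCard.mp hS'
        have hi : i.val ≤ S.card := by rw [hcard]; omega
        have hi' : i'.val ≤ S'.card := by rw [hcard']; omega
        obtain ⟨h1, h2, h3⟩ := uniqD E ℓ P hP hi hi' hc hc' he
        exact ⟨h1, Fin.val_injective h2, h3⟩
    have hAle : (∑ S ∈ (relSet E ℓ P).powersetCard t, ∑ i : Fin (t + 1),
        (Finset.univ.filter (fun x => x ∈ clS E P S (Ifun E ℓ P S i.val) ∧
          ∃ j ∈ Ifun E ℓ P S i.val,
            ReachIn E (clS E P S (Ifun E ℓ P S i.val)) (P j) x)).card)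
        ≤ ((relSet E ℓ P).powersetCard (t + 1)).card := by
      refine stmt3_total_le ((relSet E ℓ P).powersetCard t)
        (fun S i x => x ∈ clS E P S (Ifun E ℓ P S i.val) ∧
          ∃ j ∈ Ifun E ℓ P S i.val,
            ReachIn E (clS E P S (Ifun E ℓ P S i.val)) (P j) x)
        ((relSet E ℓ P).powersetCard (t + 1)) ?_ ?_
      · intro S hS i x hc
        obtain ⟨hsub, hcard⟩ := Finset.mem_powersetCard.mp hS
        obtain ⟨j, hj, hrc⟩ := hc.2
        have hxR : x ∈ relSet E ℓ P := by
          rw [relSet, Finset.mem_filter]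
          exact ⟨Finset.mem_univ x, j, (mem_Ifun E ℓ P hj).2.2.2,
            Or.inr (reachIn_reach E hrc)⟩
        have hxS : x ∉ S := clS_not_mem E P hc.1
        rw [Finset.mem_powersetCard]
        exact ⟨Finset.insert_subset_iff.mpr ⟨hxR, hsub⟩,
          by rw [Finset.card_insert_of_notMem hxS, hcard]⟩
      · intro S hS S' hS' i i' x x' hc hc' he
        obtain ⟨-, hcard⟩ := Finset.mem_powersetCard.mp hS
        obtain ⟨-, hcard'⟩ := Finset.mem_powersetCard.mp hS'
        have hi : i.val ≤ S.card := by rw [hcard]; omega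
        have hi' : i'.val ≤ S'.card := by rw [hcard']; omega
        obtain ⟨h1, h2, h3⟩ := uniqA E ℓ P hP hi hi' hc hc' he
        exact ⟨h1, Fin.val_injective h2, h3⟩
    have hsum : (∑ S ∈ (relSet E ℓ P).powersetCard t, ∑ i : Fin (t + 1),
        sVal E P S (Ifun E ℓ P S i.val)) ≤ 2 * (r.choose (t + 1)) := by
      have h1 : (∑ S ∈ (relSet E ℓ P).powersetCard t, ∑ i : Fin (t + 1),
            sVal E P S (Ifun E ℓ P S i.val))
          ≤ ∑ S ∈ (relSet E ℓ P).powersetCard t, ∑ i : Fin (t + 1),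
            ((Finset.univ.filter (fun x => x ∈ clS E P S (Ifun E ℓ P S i.val) ∧
              ∃ j ∈ Ifun E ℓ P S i.val,
                ReachIn E (clS E P S (Ifun E ℓ P S i.val)) x (P j))).card
            + (Finset.univ.filter (fun x => x ∈ clS E P S (Ifun E ℓ P S i.val) ∧
              ∃ j ∈ Ifun E ℓ P S i.val,
                ReachIn E (clS E P S (Ifun E ℓ P S i.val)) (P j) x)).card) :=
        Finset.sum_le_sum fun S _ => Finset.sum_le_sum fun i _ => sVal_le E P S _
      simp only [Finset.sum_add_distrib] at h1
      refine le_trans h1 ?_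
      rw [two_mul, hr, ← Finset.card_powersetCard (t + 1) (relSet E ℓ P)]
      exact add_le_add hDle hAle
    have hchoose : (t + 1) * r.choose (t + 1) ≤ r * r.choose t := by
      have hh := Nat.choose_succ_right_eq r t
      calc (t + 1) * r.choose (t + 1) = r.choose t * (r - t) := by rw [mul_comm, hh]
        _ ≤ r.choose t * r := Nat.mul_le_mul_left _ (Nat.sub_le r t)
        _ = r * r.choose t := mul_comm _ _
    have hNkey : (∑ S ∈ (relSet E ℓ P).powersetCard t, ∑ i : Fin (t + 1),
        sVal E P S (Ifun E ℓ P S i.val)) * (t + 1) ≤ 2 * (r * r.choose t) := by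
      calc _ ≤ (2 * (r.choose (t + 1))) * (t + 1) := Nat.mul_le_mul_right _ hsum
        _ = 2 * ((t + 1) * r.choose (t + 1)) := by ring
        _ ≤ 2 * (r * r.choose t) := Nat.mul_le_mul_left _ hchoose
    have hCpos : (0 : ℝ) < (r.choose t : ℝ) := by
      exact_mod_cast Nat.choose_pos ht
    have ht1 : (0 : ℝ) < (t : ℝ) + 1 := by positivity
    have hcast : (∑ S ∈ (relSet E ℓ P).powersetCard t, ∑ i : Fin (t + 1),
        (sVal E P S (Ifun E ℓ P S i.val) : ℝ))
        = ((∑ S ∈ (relSet E ℓ P).powersetCard t, ∑ i : Fin (t + 1),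
        sVal E P S (Ifun E ℓ P S i.val) : ℕ) : ℝ) := by push_cast; rfl
    rw [hcast, div_le_iff₀ hCpos,
      show (2 / ((t : ℝ) + 1) * (r : ℝ)) * (r.choose t : ℝ)
        = (2 * (r : ℝ) * (r.choose t : ℝ)) / ((t : ℝ) + 1) by ring,
      le_div_iff₀ ht1]
    have : ((∑ S ∈ (relSet E ℓ P).powersetCard t, ∑ i : Fin (t + 1),
        sVal E P S (Ifun E ℓ P S i.val)) * (t + 1) : ℕ)
        ≤ ((2 * (r * r.choose t) : ℕ)) := hNkey
    calc ((∑ S ∈ (relSet E ℓ P).powersetCard t, ∑ i : Fin (t + 1),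
          sVal E P S (Ifun E ℓ P S i.val) : ℕ) : ℝ) * ((t : ℝ) + 1)
        = (((∑ S ∈ (relSet E ℓ P).powersetCard t, ∑ i : Fin (t + 1),
          sVal E P S (Ifun E ℓ P S i.val)) * (t + 1) : ℕ) : ℝ) := by push_cast; ring
      _ ≤ ((2 * (r * r.choose t) : ℕ) : ℝ) := by exact_mod_cast this
      _ = 2 * (r : ℝ) * (r.choose t : ℝ) := by push_cast; ring
end

section
/- Let G be a digraph, P a directed path in G, and A a set of l+1 distinct ancestors of P. For a ∈ A, say that a survives if, when the shortcutter set S = A∖{a} is used to label vertices and form the label partition V_1, …, V_{ℓ'}, the vertex a receives no ✗ label and lies in some class V_i that also contains a vertex of P related to a within the induced subgraph G[V_i]. Then at most one element of A survives; consequently, if a is chosen uniformly at random from A, the probability that a survives is at most 1/(l+1). The same statement holds when A is a set of l+1 distinct descendants of P. -/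
/-- The label class (with respect to the shortcutter set `S`) of a vertex `a`:
all vertices with no `✗` label and the same labels as `a`. -/
def LabelClass {V : Type} (E : V → V → Prop) (S : Finset V) (a : V) : Set V :=
  {x : V | NoX E S x ∧ SameLabels E S a x}

/-- `a` survives when the shortcutter set `S = A \ {a}` is used: `a` receives
no `✗` label and its label class contains a vertex `P j` of the path that is
related to `a` within the induced subgraph on that class. -/
def Survives {V : Type} (E : V → V → Prop) (ℓ : ℕ) (P : ℕ → V) (A : Finset V)
    [DecidableEq V] (a : V) : Prop :=
  NoX E (A.erase a) a ∧
  ∃ j ≤ ℓ, (P j) ∈ LabelClass E (A.erase a) a ∧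
    (ReachIn E (LabelClass E (A.erase a) a) a (P j) ∨
     ReachIn E (LabelClass E (A.erase a) a) (P j) a)


/-!
If `a ≠ b` both survive, with witnesses `P j` and `P k`, then in the ancestor case `a ⪯ P j`
(as `P j ⪯ a` would give `P 0 ⪯ a`), and since `P j ⋠ b` the labels for `b` force `a ⋠ b`,
hence `b ⋠ P j`; symmetrically `b ⪯ P k` and `a ⋠ P k`. The path vertices form a chain, so
`j ≤ k` gives `a ⪯ P k` and `k ≤ j` gives `b ⪯ P j`, a contradiction either way. Reversing all
edges turns descendants into ancestors.
-/

theorem false_of_crossed_labels {α : Type*} {R : α → α → Prop} [IsTrans α R]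
    {s a b x y : α} (hsx : R s x) (hsy : R s y) (hsa : ¬ R s a) (hsb : ¬ R s b)
    (hxy : R x y ∨ R y x) (hax : R a x ∨ R x a) (hby : R b y ∨ R y b)
    (hbx : (R b a ↔ R b x) ∧ (R a b ↔ R x b)) (hay : (R a b ↔ R a y) ∧ (R b a ↔ R y a)) :
    False := by
  have hRax : R a x := hax.resolve_right fun h => hsa (trans_of R hsx h)
  have hRby : R b y := hby.resolve_right fun h => hsb (trans_of R hsy h)
  have hnab : ¬ R a b := fun h => hsb (trans_of R hsx (hbx.2.mp h))
  have hnba : ¬ R b a := fun h => hsa (trans_of R hsy (hay.2.mp h))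
  rcases hxy with h | h
  · exact hnab (hay.1.mpr (trans_of R hRax h))
  · exact hnba (hbx.1.mpr (trans_of R hRby h))

theorem reach_iff_reflTransGen {V : Type} {E : V → V → Prop} {u v : V} :
    Reach E u v ↔ Relation.ReflTransGen E u v := by
  constructor
  · rintro ⟨n, h⟩
    induction n generalizing u with
    | zero => exact (show u = v from h) ▸ Relation.ReflTransGen.refl
    | succ n ih =>
      obtain ⟨w, huw, hw⟩ := h
      exact Relation.ReflTransGen.head huw (ih hw)
  · intro h
    induction h using Relation.ReflTransGen.head_induction_on with
    | refl => exact ⟨0, rfl⟩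
    | head huw _ ih =>
      obtain ⟨n, hn⟩ := ih
      exact ⟨n + 1, _, huw, hn⟩

instance Reach.isTrans {V : Type} (E : V → V → Prop) : IsTrans V (Reach E) where
  trans _ _ _ h₁ h₂ := reach_iff_reflTransGen.mpr
    ((reach_iff_reflTransGen.mp h₁).trans (reach_iff_reflTransGen.mp h₂))

theorem reach_of_reachIn {V : Type} {E : V → V → Prop} {C : Set V} {u v : V}
    (h : ReachIn E C u v) : Reach E u v := by
  obtain ⟨n, h⟩ := h
  refine ⟨n, ?_⟩
  induction n generalizing u with
  | zero => exact h.1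
  | succ n ih =>
    obtain ⟨_, w, huw, hw⟩ := h
    exact ⟨w, huw, ih hw⟩

theorem reach_path_s4 {V : Type} {E : V → V → Prop} {ℓ : ℕ} {P : ℕ → V}
    (hP : ∀ i < ℓ, E (P i) (P (i + 1))) {i j : ℕ} (hij : i ≤ j) (hj : j ≤ ℓ) :
    Reach E (P i) (P j) := by
  rw [reach_iff_reflTransGen]
  induction j, hij using Nat.le_induction with
  | base => exact Relation.ReflTransGen.refl
  | succ k _ ih => exact (ih (by omega)).tail (hP k (by omega))

theorem Survives.exists_related_sameLabels {V : Type} [DecidableEq V] {E : V → V → Prop}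
    {ℓ : ℕ} {P : ℕ → V} {A : Finset V} {a : V} (h : Survives E ℓ P A a) :
    ∃ j ≤ ℓ, (Reach E a (P j) ∨ Reach E (P j) a) ∧ SameLabels E (A.erase a) a (P j) := by
  obtain ⟨-, j, hj, ⟨-, hlabels⟩, hrel⟩ := h
  exact ⟨j, hj, hrel.imp reach_of_reachIn reach_of_reachIn, hlabels⟩

theorem survives_unique {V : Type} [DecidableEq V] {E : V → V → Prop} {ℓ : ℕ} {P : ℕ → V}
    (hP : ∀ i < ℓ, E (P i) (P (i + 1))) {A : Finset V}
    (hA : (∀ a ∈ A, Reach E a (P ℓ) ∧ ¬ Reach E (P 0) a) ∨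
          (∀ a ∈ A, Reach E (P 0) a ∧ ¬ Reach E a (P ℓ)))
    {a b : V} (ha : a ∈ A) (hb : b ∈ A) (hsa : Survives E ℓ P A a)
    (hsb : Survives E ℓ P A b) : a = b := by
  by_contra hab
  obtain ⟨j, hj, hrel_a, hlab_a⟩ := hsa.exists_related_sameLabels
  obtain ⟨k, hk, hrel_b, hlab_b⟩ := hsb.exists_related_sameLabels
  have hbx := hlab_a b (Finset.mem_erase.mpr ⟨Ne.symm hab, hb⟩)
  have hay := hlab_b a (Finset.mem_erase.mpr ⟨hab, ha⟩)
  have hjk : Reach E (P j) (P k) ∨ Reach E (P k) (P j) :=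
    (le_total j k).imp (reach_path_s4 hP · hk) (reach_path_s4 hP · hj)
  rcases hA with hanc | hdes
  · exact false_of_crossed_labels (reach_path_s4 hP j.zero_le hj)
      (reach_path_s4 hP k.zero_le hk) (hanc a ha).2 (hanc b hb).2 hjk hrel_a hrel_b hbx hay
  · exact false_of_crossed_labels (R := Function.swap (Reach E)) (reach_path_s4 hP hj le_rfl)
      (reach_path_s4 hP hk le_rfl) (hdes a ha).2 (hdes b hb).2 hjk.symm hrel_a.symm hrel_b.symm hbx.symm hay.symm

open Classical in
/-- Let `P = ⟨v_0, …, v_ℓ⟩` be a directed path in a digraph `G` and `A` a set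
of `l + 1` distinct ancestors of `P` (or, alternatively, `l + 1` distinct
descendants of `P`).  Then at most one element of `A` survives; consequently a
uniformly random element of `A` survives with probability at most `1/(l+1)`. -/
theorem stmt_4 {V : Type} [DecidableEq V] (E : V → V → Prop) (ℓ : ℕ) (P : ℕ → V)
    (hP : ∀ i < ℓ, E (P i) (P (i + 1))) (l : ℕ) (A : Finset V) (hcard : A.card = l + 1)
    (hA : (∀ a ∈ A, Reach E a (P ℓ) ∧ ¬ Reach E (P 0) a) ∨
          (∀ a ∈ A, Reach E (P 0) a ∧ ¬ Reach E a (P ℓ))) :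
    (∀ a ∈ A, ∀ b ∈ A, Survives E ℓ P A a → Survives E ℓ P A b → a = b) ∧
    ((A.filter (fun a => Survives E ℓ P A a)).card : ℝ) / (A.card : ℝ)
      ≤ 1 / ((l : ℝ) + 1) := by
  have huniq : ∀ a ∈ A, ∀ b ∈ A, Survives E ℓ P A a → Survives E ℓ P A b → a = b :=
    fun _ ha _ hb => survives_unique hP hA ha hb
  refine ⟨huniq, ?_⟩
  have hle : ((A.filter (fun a => Survives E ℓ P A a)).card : ℝ) ≤ 1 := by
    exact_mod_cast Finset.card_le_one.mpr fun a ha b hb =>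
      huniq a (Finset.mem_filter.mp ha).1 b (Finset.mem_filter.mp hb).1
        (Finset.mem_filter.mp ha).2 (Finset.mem_filter.mp hb).2
  rw [hcard, Nat.cast_succ]
  gcongr
end

section
/- For every integer t ≥ 1 and every real g with 0 ≤ g ≤ 1, (1−g)^t · (2/(t+1) + g) ≤ 2/(t+1). -/
/-!
Multiplying by `t + 1`, the claim says `(1 - g)^t (2 + (t + 1) g) ≤ 2`. The left side is antitone
in `t`, since passing from `t` to `t + 1` multiplies `2 + (t + 1) g` by `1 - g` and adds `g`, which
costs `g (1 + (t + 2) g) ≥ 0`; at `t = 1` it equals `2 (1 - g²) ≤ 2`.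
-/

lemma antitone_one_sub_pow_mul_two_add {g : ℝ} (hg0 : 0 ≤ g) (hg1 : g ≤ 1) :
    Antitone fun t : ℕ => (1 - g) ^ t * (2 + (t + 1) * g) := by
  refine antitone_nat_of_succ_le fun t => ?_
  have hpow : 0 ≤ (1 - g) ^ t := pow_nonneg (by linarith) t
  have hstep : (1 - g) * (2 + (t + 1 + 1) * g) ≤ 2 + (t + 1) * g := by
    nlinarith [mul_nonneg hg0 (Nat.cast_nonneg t : (0 : ℝ) ≤ t)]
  push_cast
  calc (1 - g) ^ (t + 1) * (2 + (t + 1 + 1) * g)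
      = (1 - g) ^ t * ((1 - g) * (2 + (t + 1 + 1) * g)) := by ring
    _ ≤ (1 - g) ^ t * (2 + (t + 1) * g) := mul_le_mul_of_nonneg_left hstep hpow

lemma one_sub_pow_mul_two_add_le_two {t : ℕ} (ht : 1 ≤ t) {g : ℝ} (hg0 : 0 ≤ g) (hg1 : g ≤ 1) :
    (1 - g) ^ t * (2 + (t + 1) * g) ≤ 2 := by
  calc (1 - g) ^ t * (2 + (t + 1) * g)
      ≤ (1 - g) ^ 1 * (2 + ((1 : ℕ) + 1) * g) := antitone_one_sub_pow_mul_two_add hg0 hg1 ht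
    _ = 2 - 2 * g ^ 2 := by push_cast; ring
    _ ≤ 2 := by nlinarith

/-- For every integer `t ≥ 1` and real `0 ≤ g ≤ 1`,
`(1−g)^t · (2/(t+1) + g) ≤ 2/(t+1)`. -/
theorem stmt_7 (t : ℕ) (ht : 1 ≤ t) (g : ℝ) (hg0 : 0 ≤ g) (hg1 : g ≤ 1) :
    (1 - g) ^ t * (2 / (t + 1 : ℝ) + g) ≤ 2 / (t + 1 : ℝ) := by
  have ht1 : (0 : ℝ) < t + 1 := by positivity
  calc (1 - g) ^ t * (2 / (t + 1 : ℝ) + g)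
      = (1 - g) ^ t * (2 + (t + 1) * g) / (t + 1) := by field_simp
    _ ≤ 2 / (t + 1 : ℝ) := by
      gcongr
      exact one_sub_pow_mul_two_add_le_two ht hg0 hg1
end

section
/- Let t ∈ ℕ and let p, q be positive reals with p + q ≤ 1. Let a be a binomial random variable with parameters t and p/(p+q). Then E[ p/(a+1) + q/(t−a+1) ] ≤ 2(p+q)/(t+1), and in particular this expectation is at most 2/(t+1). -/
/-- Let `p, q > 0` with `p + q ≤ 1` and let `a ∼ B(t, p/(p+q))`.  Then
`E[ p/(a+1) + q/(t−a+1) ] ≤ 2(p+q)/(t+1) ≤ 2/(t+1)`.  The expectation is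
written out explicitly as a sum over the binomial point masses. -/
theorem stmt_8 (t : ℕ) (p q : ℝ) (hp : 0 < p) (hq : 0 < q) (hpq : p + q ≤ 1) :
    (∑ k ∈ Finset.range (t + 1),
        (t.choose k : ℝ) * (p / (p + q)) ^ k * (q / (p + q)) ^ (t - k) *
          (p / ((k : ℝ) + 1) + q / (((t - k : ℕ) : ℝ) + 1)))
      ≤ 2 * (p + q) / ((t : ℝ) + 1)
    ∧ (∑ k ∈ Finset.range (t + 1),
        (t.choose k : ℝ) * (p / (p + q)) ^ k * (q / (p + q)) ^ (t - k) *
          (p / ((k : ℝ) + 1) + q / (((t - k : ℕ) : ℝ) + 1)))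
      ≤ 2 / ((t : ℝ) + 1) := by
  have hs : (0:ℝ) < p + q := by linarith
  set x : ℝ := p / (p + q) with hx
  set y : ℝ := q / (p + q) with hy
  clear_value x y
  have hx0 : 0 ≤ x := by rw [hx]; positivity
  have hy0 : 0 ≤ y := by rw [hy]; positivity
  have hxy : x + y = 1 := by
    rw [hx, hy, ← add_div, div_self hs.ne']
  have ht1 : (0:ℝ) < (t:ℝ) + 1 := by positivity
  -- binomial theorem
  have hbin : ∑ k ∈ Finset.range (t + 2),
      x ^ k * y ^ (t + 1 - k) * ((t+1).choose k : ℝ) = 1 := by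
    have := add_pow x y (t + 1)
    rw [hxy, one_pow] at this
    exact this.symm
  -- termwise identity
  have key : ∀ k ∈ Finset.range (t + 1),
      (t.choose k : ℝ) * x ^ k * y ^ (t - k) *
          (p / ((k : ℝ) + 1) + q / (((t - k : ℕ) : ℝ) + 1))
        = (p + q) / ((t:ℝ) + 1) *
          (x ^ (k+1) * y ^ (t + 1 - (k+1)) * ((t+1).choose (k+1) : ℝ)
            + x ^ k * y ^ (t + 1 - k) * ((t+1).choose k : ℝ)) := by
    intro k hk
    have hkt : k ≤ t := Nat.lt_succ_iff.mp (Finset.mem_range.mp hk)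
    have h1 : ((t:ℝ) + 1) * (t.choose k : ℝ) = ((t+1).choose (k+1) : ℝ) * ((k:ℝ) + 1) := by
      exact_mod_cast congrArg (Nat.cast : ℕ → ℝ) (Nat.add_one_mul_choose_eq t k)
    have h2 : ((t:ℝ) + 1) * (t.choose k : ℝ) = ((t+1).choose k : ℝ) * (((t - k : ℕ):ℝ) + 1) := by
      have := Nat.add_one_mul_choose_eq t (t - k)
      rw [Nat.choose_symm hkt] at this
      have h3 : (t+1).choose (t - k + 1) = (t+1).choose k := by
        rw [← Nat.choose_symm (by omega : t - k + 1 ≤ t + 1)]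
        congr 1
        omega
      rw [h3] at this
      exact_mod_cast congrArg (Nat.cast : ℕ → ℝ) this
    have hA : (t.choose k : ℝ) / ((k:ℝ) + 1) = ((t+1).choose (k+1) : ℝ) / ((t:ℝ) + 1) := by
      rw [div_eq_div_iff (by positivity) ht1.ne']
      linarith [h1]
    have hB : (t.choose k : ℝ) / (((t - k : ℕ):ℝ) + 1) = ((t+1).choose k : ℝ) / ((t:ℝ) + 1) := by
      rw [div_eq_div_iff (by positivity) ht1.ne']
      linarith [h2]
    have hp' : p = x * (p + q) := by rw [hx]; field_simp
    have hq' : q = y * (p + q) := by rw [hy]; field_simp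
    have e1 : t + 1 - (k + 1) = t - k := by omega
    have e2 : t + 1 - k = (t - k) + 1 := by omega
    rw [e1, e2]
    linear_combination (x^(k+1) * y^(t-k) * (p+q)) * hA
      + (x^k * y^((t-k)+1) * (p+q)) * hB
      + ((t.choose k : ℝ) * x^k * y^(t-k) / ((k:ℝ)+1)) * hp'
      + ((t.choose k : ℝ) * x^k * y^(t-k) / (((t-k:ℕ):ℝ)+1)) * hq'
  rw [Finset.sum_congr rfl key, ← Finset.mul_sum, Finset.sum_add_distrib]
  -- bound each of the two sums by 1
  have hnn : ∀ j ∈ Finset.range (t + 2), 0 ≤ x ^ j * y ^ (t + 1 - j) * ((t+1).choose j : ℝ) := by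
    intro j _; positivity
  have hA' : ∑ k ∈ Finset.range (t + 1),
      x ^ (k+1) * y ^ (t + 1 - (k+1)) * ((t+1).choose (k+1) : ℝ) ≤ 1 := by
    have := Finset.sum_range_succ' (fun j => x ^ j * y ^ (t + 1 - j) * ((t+1).choose j : ℝ)) (t+1)
    rw [this] at hbin
    have h0 : 0 ≤ x ^ 0 * y ^ (t + 1 - 0) * ((t+1).choose 0 : ℝ) := by positivity
    linarith
  have hB' : ∑ k ∈ Finset.range (t + 1),
      x ^ k * y ^ (t + 1 - k) * ((t+1).choose k : ℝ) ≤ 1 := by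
    have := Finset.sum_range_succ (fun j => x ^ j * y ^ (t + 1 - j) * ((t+1).choose j : ℝ)) (t+1)
    rw [this] at hbin
    have h0 : 0 ≤ x ^ (t+1) * y ^ (t + 1 - (t+1)) * ((t+1).choose (t+1) : ℝ) := by positivity
    linarith
  have hfirst : (p + q) / ((t:ℝ) + 1) *
      ((∑ k ∈ Finset.range (t + 1), x ^ (k+1) * y ^ (t + 1 - (k+1)) * ((t+1).choose (k+1) : ℝ))
        + ∑ k ∈ Finset.range (t + 1), x ^ k * y ^ (t + 1 - k) * ((t+1).choose k : ℝ))
      ≤ 2 * (p + q) / ((t:ℝ) + 1) := by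
    have h2 : (p + q) * ((∑ k ∈ Finset.range (t + 1),
          x ^ (k+1) * y ^ (t + 1 - (k+1)) * ((t+1).choose (k+1) : ℝ))
        + ∑ k ∈ Finset.range (t + 1), x ^ k * y ^ (t + 1 - k) * ((t+1).choose k : ℝ))
        ≤ 2 * (p + q) := by nlinarith
    calc (p + q) / ((t:ℝ) + 1) * _ = ((p + q) * _) / ((t:ℝ) + 1) := by ring
      _ ≤ 2 * (p + q) / ((t:ℝ) + 1) := (div_le_div_iff_of_pos_right ht1).mpr h2
  exact ⟨hfirst, hfirst.trans ((div_le_div_iff_of_pos_right ht1).mpr (by linarith))⟩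
end

section
/- Let I be a finite set and for each i ∈ I let S_i ⊆ I be a subset with i ∈ S_i, and suppose that for all i, j ∈ I, i ∈ S_j or j ∈ S_i. Then for every real c > 0, the number of indices i ∈ I with |S_i| < c is at most 2c. -/
open Classical in
/-- Let `I` be a finite set and for each `i ∈ I` let `S i ⊆ I` with `i ∈ S i`,
such that for all `i, j ∈ I`, `i ∈ S j` or `j ∈ S i`.  Then for every real
`c > 0`, the number of indices `i ∈ I` with `|S i| < c` is at most `2c`. -/
theorem stmt_9 {ι : Type*} [DecidableEq ι] (I : Finset ι) (S : ι → Finset ι)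
    (hsub : ∀ i ∈ I, S i ⊆ I) (hmem : ∀ i ∈ I, i ∈ S i)
    (hcomp : ∀ i ∈ I, ∀ j ∈ I, i ∈ S j ∨ j ∈ S i) :
    ∀ c : ℝ, 0 < c →
      ((I.filter (fun i => ((S i).card : ℝ) < c)).card : ℝ) ≤ 2 * c := by
  intro c hc
  set T := I.filter (fun i => ((S i).card : ℝ) < c) with hT
  have hTI : T ⊆ I := Finset.filter_subset _ _
  rcases T.eq_empty_or_nonempty with h0 | hne
  · rw [h0]; simp; positivity
  -- the pair set
  set P := (T ×ˢ T).filter (fun p => p.2 ∈ S p.1) with hP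
  -- T ×ˢ T ⊆ P ∪ P.image Prod.swap
  have hcover : T ×ˢ T ⊆ P ∪ P.image Prod.swap := by
    intro p hp
    rw [Finset.mem_product] at hp
    obtain ⟨h1, h2⟩ := hp
    rcases hcomp p.2 (hTI h2) p.1 (hTI h1) with h | h
    · apply Finset.mem_union_left
      rw [hP, Finset.mem_filter, Finset.mem_product]
      exact ⟨⟨h1, h2⟩, h⟩
    · apply Finset.mem_union_right
      refine Finset.mem_image.mpr ⟨(p.2, p.1), ?_, Prod.swap_swap _ ▸ rfl⟩
      rw [hP, Finset.mem_filter, Finset.mem_product]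
      exact ⟨⟨h2, h1⟩, h⟩
  have hsq : T.card ^ 2 ≤ 2 * P.card := by
    calc T.card ^ 2 = (T ×ˢ T).card := by rw [Finset.card_product]; ring
    _ ≤ (P ∪ P.image Prod.swap).card := Finset.card_le_card hcover
    _ ≤ P.card + (P.image Prod.swap).card := Finset.card_union_le _ _
    _ ≤ P.card + P.card := by
        exact Nat.add_le_add_left Finset.card_image_le P.card
    _ = 2 * P.card := by ring
  -- fiberwise count
  have hPsum : P.card = ∑ i ∈ T, (P.filter (fun p => p.1 = i)).card := by
    apply Finset.card_eq_sum_card_fiberwise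
    intro p hp
    rw [Finset.mem_coe, hP, Finset.mem_filter, Finset.mem_product] at hp
    exact hp.1.1
  have hfiber : ∀ i ∈ T, (P.filter (fun p => p.1 = i)).card ≤ (S i).card := by
    intro i hi
    apply Finset.card_le_card_of_injOn (fun p => p.2)
    · intro p hp
      rw [Finset.mem_coe, Finset.mem_filter, hP, Finset.mem_filter] at hp
      exact hp.2 ▸ hp.1.2
    · intro p hp q hq hpq
      rw [Finset.mem_coe, Finset.mem_filter] at hp hq
      exact Prod.ext (hp.2.trans hq.2.symm) hpq
  have hPc : (P.card : ℝ) < T.card * c := by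
    rw [hPsum]
    push_cast
    calc (∑ i ∈ T, ((P.filter (fun p => p.1 = i)).card : ℝ))
        < ∑ i ∈ T, c := by
          apply Finset.sum_lt_sum_of_nonempty hne
          intro i hi
          have h1 : ((P.filter (fun p => p.1 = i)).card : ℝ) ≤ (S i).card := by
            exact_mod_cast hfiber i hi
          have h2 : ((S i).card : ℝ) < c := (Finset.mem_filter.mp hi).2
          linarith
    _ = T.card * c := by rw [Finset.sum_const, nsmul_eq_mul]
  have ht1 : (1 : ℝ) ≤ T.card := by exact_mod_cast Finset.card_pos.mpr hne
  have hsq' : (T.card : ℝ) ^ 2 ≤ 2 * P.card := by exact_mod_cast hsq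
  nlinarith [hsq', hPc, ht1]
end

section
/- Let G be a digraph, P = ⟨v_0, v_1, …, v_ℓ⟩ a directed path in G, and S a finite set of vertices each of which is either an ancestor of P or a descendant of P (and none of which is a bridge of P). Then the index set {0, 1, …, ℓ} can be partitioned into at most |S|+1 contiguous intervals such that whenever i and j lie in the same interval, for every s ∈ S it holds that (s ⪯ v_i ⟺ s ⪯ v_j) and (v_i ⪯ s ⟺ v_j ⪯ s). -/
theorem Nat.exists_interval_partition_avoiding (T : Finset ℕ) (n : ℕ) :
    ∃ (m : ℕ) (c : ℕ → ℕ), m ≤ T.card + 1 ∧ Monotone c ∧ c 0 = 0 ∧ c m = n ∧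
      ∀ r < m, ∀ t ∈ T, t ≤ c r ∨ c (r + 1) ≤ t := by
  induction T using Finset.induction_on_max generalizing n with
  | empty =>
    refine ⟨1, fun r => if r = 0 then 0 else n, le_rfl, fun a b hab => ?_, rfl, rfl, by simp⟩
    dsimp only
    split_ifs <;> omega
  | insert a T hlt ih =>
    rw [Finset.card_insert_of_notMem fun ha => lt_irrefl a (hlt a ha)]
    by_cases han : n ≤ a
    · obtain ⟨m, c, hm, hc, hc0, hcm, hcut⟩ := ih n
      refine ⟨m, c, by omega, hc, hc0, hcm, fun r hr t ht => ?_⟩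
      rcases Finset.mem_insert.mp ht with rfl | ht
      · exact .inr ((hc hr).trans (hcm.trans_le han))
      · exact hcut r hr t ht
    · -- cut `[0, a)` at the thresholds below `a`, then append the interval `[a, n)`
      obtain ⟨m, c, hm, hc, hc0, hcm, hcut⟩ := ih a
      have hca : ∀ r ≤ m, c r ≤ a := fun r hr => hcm ▸ hc hr
      refine ⟨m + 1, fun r => if r ≤ m then c r else n, by omega, fun i j hij => ?_,
        by simp [hc0], by simp, fun r hr t ht => ?_⟩
      · dsimp only
        split_ifs with hi hj
        · exact hc hij
        · exact (hca i hi).trans (by omega)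
        · omega
        · exact le_rfl
      · dsimp only
        rcases Finset.mem_insert.mp ht with rfl | ht
        · split_ifs with hr₀ hr₁
          · exact .inr (hca (r + 1) hr₁)
          · exact .inl (by rw [show r = m by omega, hcm])
          all_goals omega
        · have hta := hlt t ht
          rcases Nat.lt_or_ge r m with hr | hr
          · simpa [hr.le, Nat.succ_le_of_lt hr] using hcut r hr t ht
          · exact .inl (by rw [if_pos (by omega), show r = m by omega, hcm]; exact hta.le)

theorem Nat.exists_threshold_of_upwardClosed {Q : ℕ → Prop} {ℓ : ℕ}
    (hQ : ∀ i j, i ≤ j → j ≤ ℓ → Q i → Q j) : ∃ t, ∀ k ≤ ℓ, Q k ↔ t ≤ k := by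
  classical
  by_cases h : ∃ k ≤ ℓ, Q k
  · refine ⟨Nat.find h, fun k hk => ⟨fun hQk => Nat.find_min' h ⟨hk, hQk⟩, fun htk => ?_⟩⟩
    exact hQ _ _ htk hk (Nat.find_spec h).2
  · exact ⟨ℓ + 1, fun k hk => iff_of_false (fun hQk => h ⟨k, hk, hQk⟩) (by omega)⟩

section Digraph

variable {V : Type} {E : V → V → Prop}

theorem HasPath.append {m n : ℕ} {u v w : V} (h₁ : HasPath E m u v) (h₂ : HasPath E n v w) :
    HasPath E (m + n) u w := by
  induction m generalizing u with
  | zero => cases h₁; simpa using h₂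
  | succ m ih =>
    obtain ⟨x, hux, hxv⟩ := h₁
    rw [Nat.add_right_comm]
    exact ⟨x, hux, ih hxv⟩

theorem Reach.trans {u v w : V} (h₁ : Reach E u v) (h₂ : Reach E v w) : Reach E u w :=
  let ⟨_, h₁⟩ := h₁
  let ⟨_, h₂⟩ := h₂
  ⟨_, h₁.append h₂⟩

theorem Reach.single {u v : V} (h : E u v) : Reach E u v := ⟨1, v, h, rfl⟩

variable {ℓ : ℕ} {P : ℕ → V}

theorem reach_path_of_le (hP : ∀ i < ℓ, E (P i) (P (i + 1))) {i j : ℕ} (hij : i ≤ j)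
    (hj : j ≤ ℓ) : Reach E (P i) (P j) := by
  induction j, hij using Nat.le_induction with
  | base => exact ⟨0, rfl⟩
  | succ j hij ih => exact (ih (by omega)).trans (.single (hP j (by omega)))

theorem exists_threshold_reach_path (hP : ∀ i < ℓ, E (P i) (P (i + 1))) {s : V}
    (hs : ¬ Reach E (P 0) s ∨ ¬ Reach E s (P ℓ)) :
    ∃ t, ∀ i ≤ ℓ, ∀ j ≤ ℓ, (t ≤ i ↔ t ≤ j) →
      (Reach E s (P i) ↔ Reach E s (P j)) ∧ (Reach E (P i) s ↔ Reach E (P j) s) := by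
  rcases hs with h0 | hℓ
  · obtain ⟨t, ht⟩ := Nat.exists_threshold_of_upwardClosed (Q := fun k => Reach E s (P k))
      (ℓ := ℓ) fun i j hij hj hi => hi.trans (reach_path_of_le hP hij hj)
    have hnot : ∀ k ≤ ℓ, ¬ Reach E (P k) s := fun k hk h =>
      h0 ((reach_path_of_le hP k.zero_le hk).trans h)
    exact ⟨t, fun i hi j hj hij =>
      ⟨(ht i hi).trans (hij.trans (ht j hj).symm), iff_of_false (hnot i hi) (hnot j hj)⟩⟩
  · obtain ⟨t, ht⟩ := Nat.exists_threshold_of_upwardClosed (Q := fun k => ¬ Reach E (P k) s)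
      (ℓ := ℓ) fun i j hij hj hi h => hi ((reach_path_of_le hP hij hj).trans h)
    have hnot : ∀ k ≤ ℓ, ¬ Reach E s (P k) := fun k hk h =>
      hℓ (h.trans (reach_path_of_le hP hk le_rfl))
    exact ⟨t, fun i hi j hj hij => ⟨iff_of_false (hnot i hi) (hnot j hj),
      not_iff_not.mp ((ht i hi).trans (hij.trans (ht j hj).symm))⟩⟩

end Digraph

/-- Let `P = ⟨v_0, …, v_ℓ⟩` be a directed path in a digraph `G` and `S` a
finite set of vertices, each of which is an ancestor or a descendant of `P`
(so none is a bridge).  Then `{0, …, ℓ}` can be partitioned into at most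
`|S| + 1` contiguous intervals (given by cut points `c 0 = 0 ≤ c 1 ≤ ⋯ ≤ c m
= ℓ+1`) such that whenever `i` and `j` lie in the same interval, every `s ∈ S`
satisfies `s ⪯ v_i ⟺ s ⪯ v_j` and `v_i ⪯ s ⟺ v_j ⪯ s`. -/
theorem stmt_10 {V : Type} (E : V → V → Prop) (ℓ : ℕ) (P : ℕ → V)
    (hP : ∀ i < ℓ, E (P i) (P (i + 1))) (S : Finset V)
    (hS : ∀ s ∈ S,
      (Reach E s (P ℓ) ∧ ¬ Reach E (P 0) s) ∨ (Reach E (P 0) s ∧ ¬ Reach E s (P ℓ))) :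
    ∃ (m : ℕ) (c : ℕ → ℕ), m ≤ S.card + 1 ∧ Monotone c ∧ c 0 = 0 ∧ c m = ℓ + 1 ∧
      ∀ r < m, ∀ i j, c r ≤ i → i < c (r + 1) → c r ≤ j → j < c (r + 1) →
        ∀ s ∈ S, (Reach E s (P i) ↔ Reach E s (P j)) ∧
          (Reach E (P i) s ↔ Reach E (P j) s) := by
  classical
  choose! t ht using fun s hs => exists_threshold_reach_path hP ((hS s hs).imp (·.2) (·.2))
  obtain ⟨m, c, hm, hc, hc0, hcm, hcut⟩ := Nat.exists_interval_partition_avoiding (S.image t) (ℓ + 1)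
  refine ⟨m, c, hm.trans (by grw [Finset.card_image_le]), hc, hc0, hcm,
    fun r hr i j hi hi' hj hj' s hs => ?_⟩
  have hend : c (r + 1) ≤ ℓ + 1 := hcm ▸ hc hr
  refine ht s hs i (by omega) j (by omega) ?_
  rcases hcut r hr (t s) (Finset.mem_image_of_mem t hs) with h | h <;> omega
end

section
/- Let G be a digraph, F a set of shortcut edges of G, D ≥ 1 an integer, and let G∪F denote the digraph obtained from G by adding the edges of F. Suppose that for all vertices u, v with d_G(u,v) ≤ D it holds that d_{G∪F}(u,v) ≤ D/5. Then for all vertices u, v with D ≤ d_G(u,v) < ∞, d_{G∪F}(u,v) ≤ d_G(u,v)/2. -/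
lemma aux_ddist_le {V : Type} {E : V → V → Prop} {m : ℕ} {u v : V}
    (h : HasPath E m u v) : ddist E u v ≤ m := sInf_le ⟨m, rfl, h⟩

lemma aux_ddist_exists {V : Type} {E : V → V → Prop} {u v : V}
    (h : ddist E u v ≠ ⊤) : ∃ m : ℕ, ddist E u v = m ∧ HasPath E m u v := by
  classical
  have hne : ∃ m : ℕ, HasPath E m u v := by
    by_contra hc
    push_neg at hc
    apply h
    rw [ddist, sInf_eq_top.2]
    rintro a ⟨m, rfl, hm⟩
    exact absurd hm (hc m)
  refine ⟨Nat.find hne, le_antisymm (aux_ddist_le (Nat.find_spec hne)) ?_, Nat.find_spec hne⟩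
  apply le_sInf
  rintro a ⟨m, rfl, hm⟩
  exact_mod_cast Nat.find_le hm

lemma aux_hasPath_add {V : Type} {E : V → V → Prop} (a b : ℕ) (u v : V) :
    HasPath E (a + b) u v ↔ ∃ w, HasPath E a u w ∧ HasPath E b w v := by
  induction a generalizing u with
  | zero => simp [HasPath]
  | succ n ih =>
    rw [show n + 1 + b = (n + b) + 1 from by omega]
    simp only [HasPath]
    constructor
    · rintro ⟨w, hw, hp⟩
      obtain ⟨x, hx1, hx2⟩ := (ih w).1 hp
      exact ⟨x, ⟨w, hw, hx1⟩, hx2⟩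
    · rintro ⟨x, ⟨w, hw, hp⟩, hx⟩
      exact ⟨w, hw, (ih w).2 ⟨x, hp, hx⟩⟩

/-- Key combinatorial lemma: a path of length `m` can be replaced, segment by
segment (segments of length at most `D`), by short paths in another graph. -/
lemma aux_key {V : Type} {E E' : V → V → Prop} {D t : ℕ} (hD : 1 ≤ D)
    (hseg : ∀ u v : V, ∀ n ≤ D, HasPath E n u v → ∃ k, HasPath E' k u v ∧ k ≤ t) :
    ∀ m : ℕ, ∀ u v : V, HasPath E m u v →
      ∃ k, HasPath E' k u v ∧ k ≤ ((m + D - 1) / D) * t := by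
  intro m
  induction m using Nat.strong_induction_on with
  | _ m ih =>
    intro u v hp
    rcases Nat.lt_or_ge D m with hm | hm
    · -- m > D : split off a segment of length D
      obtain ⟨w, hp1, hp2⟩ := (aux_hasPath_add D (m - D) u v).1
        (by rwa [show D + (m - D) = m from by omega])
      obtain ⟨k₁, hk₁, hk₁t⟩ := hseg u w D le_rfl hp1
      obtain ⟨k₂, hk₂, hk₂t⟩ := ih (m - D) (by omega) w v hp2
      refine ⟨k₁ + k₂, (aux_hasPath_add k₁ k₂ u v).2 ⟨w, hk₁, hk₂⟩, ?_⟩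
      have e1 : m - D + D - 1 = m - 1 := by omega
      have e2 : (m - 1 + D) / D = (m - 1) / D + 1 := Nat.add_div_right _ (by omega)
      have e3 : m + D - 1 = m - 1 + D := by omega
      rw [e1] at hk₂t
      rw [e3, e2]
      calc k₁ + k₂ ≤ t + (m - 1) / D * t := Nat.add_le_add hk₁t hk₂t
        _ = ((m - 1) / D + 1) * t := by ring
    · -- m ≤ D
      rcases Nat.eq_zero_or_pos m with rfl | hm1
      · exact ⟨0, hp, Nat.zero_le _⟩
      · obtain ⟨k, hk, hkt⟩ := hseg u v m hm hp
        refine ⟨k, hk, ?_⟩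
        have hq : 1 ≤ (m + D - 1) / D := Nat.one_le_div_iff (by omega) |>.2 (by omega)
        calc k ≤ t := hkt
          _ = 1 * t := (one_mul t).symm
          _ ≤ (m + D - 1) / D * t := Nat.mul_le_mul_right _ hq

/-- Let `F` be a set of shortcut edges of a digraph `G` and `D ≥ 1` an integer.
If every pair `u, v` with `d_G(u,v) ≤ D` satisfies `d_{G∪F}(u,v) ≤ D/5`, then
every pair `u, v` with `D ≤ d_G(u,v) < ∞` satisfies
`d_{G∪F}(u,v) ≤ d_G(u,v)/2`. -/
theorem stmt_11 {V : Type} (E : V → V → Prop) (F : Finset (V × V))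
    (hF : ∀ e ∈ F, Reach E e.1 e.2) (D : ℕ) (hD : 1 ≤ D)
    (h : ∀ u v : V, ddist E u v ≤ (D : ENNReal) →
      ddist (fun a b => E a b ∨ (a, b) ∈ F) u v ≤ ENNReal.ofReal ((D : ℝ) / 5)) :
    ∀ u v : V, (D : ENNReal) ≤ ddist E u v → ddist E u v ≠ ⊤ →
      ddist (fun a b => E a b ∨ (a, b) ∈ F) u v ≤ ddist E u v / 2 := by
  set E' : V → V → Prop := fun a b => E a b ∨ (a, b) ∈ F with hE'
  intro u v hge hne
  obtain ⟨m, hm, hp⟩ := aux_ddist_exists hne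
  have hmD : D ≤ m := by
    rw [hm] at hge
    exact_mod_cast hge
  set t := D / 5 with ht
  have hseg : ∀ x y : V, ∀ n ≤ D, HasPath E n x y →
      ∃ k, HasPath E' k x y ∧ k ≤ t := by
    intro x y n hn hpn
    have h1 : ddist E x y ≤ (D : ENNReal) :=
      le_trans (aux_ddist_le hpn) (by exact_mod_cast hn)
    have h2 := h x y h1
    have hfin : ddist E' x y ≠ ⊤ :=
      (lt_of_le_of_lt h2 ENNReal.ofReal_lt_top).ne
    obtain ⟨k, hk, hpk⟩ := aux_ddist_exists hfin
    refine ⟨k, hpk, ?_⟩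
    rw [hk] at h2
    have hkr : (k : ℝ) ≤ (D : ℝ) / 5 := by
      rw [← ENNReal.ofReal_natCast] at h2
      exact (ENNReal.ofReal_le_ofReal_iff (by positivity)).1 h2
    rw [ht, Nat.le_div_iff_mul_le (by norm_num)]
    have : (k : ℝ) * 5 ≤ (D : ℝ) := by linarith
    exact_mod_cast this
  obtain ⟨k, hpk, hkb⟩ := aux_key hD hseg m u v hp
  have hq : (m + D - 1) / D * D ≤ m + D - 1 := Nat.div_mul_le_self _ _
  have ht5 : t * 5 ≤ D := Nat.div_mul_le_self _ _
  have h5k : 5 * k ≤ 2 * m - 1 := by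
    calc 5 * k ≤ 5 * ((m + D - 1) / D * t) := Nat.mul_le_mul_left _ hkb
      _ = (m + D - 1) / D * (t * 5) := by ring
      _ ≤ (m + D - 1) / D * D := Nat.mul_le_mul_left _ ht5
      _ ≤ m + D - 1 := hq
      _ ≤ 2 * m - 1 := by omega
  have h2k : 2 * k ≤ m := by omega
  rw [hm]
  calc ddist E' u v ≤ (k : ENNReal) := aux_ddist_le hpk
    _ ≤ (m : ENNReal) / 2 := by
        rw [ENNReal.le_div_iff_mul_le (Or.inl two_ne_zero) (Or.inl ENNReal.ofNat_ne_top)]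
        calc (k : ENNReal) * 2 = ((k * 2 : ℕ) : ENNReal) := by push_cast; ring
          _ ≤ (m : ENNReal) := by exact_mod_cast (by omega : k * 2 ≤ m)
end

section
/- Let S be a finite set, ℓ ≥ 0 an integer, and for each u ∈ S let t(u), b(u) be integers with t(u) ≤ b(u) + 1. For each subset T ⊆ S define W_T = { i ∈ {0,…,ℓ} : i < t(u) for all u ∈ T, and i > b(u) for all u ∈ S∖T }. Then each W_T is an interval of integers, the sets W_T over all T ⊆ S are pairwise disjoint, and at most |S| + 1 of them are nonempty. -/
open Classical in
/-- Let `S` be a finite set, `ℓ ≥ 0`, and for each `u ∈ S` let `t u, b u` be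
integers with `t u ≤ b u + 1`.  For `T ⊆ S` let
`W_T = { i ∈ {0,…,ℓ} : i < t u for all u ∈ T, and i > b u for all u ∈ S \ T }`.
Then each `W_T` is an interval of integers, the `W_T` are pairwise disjoint,
and at most `|S| + 1` of them are nonempty. -/
theorem stmt_13 {ι : Type*} [DecidableEq ι] (S : Finset ι) (ℓ : ℕ) (t b : ι → ℤ)
    (htb : ∀ u ∈ S, t u ≤ b u + 1)
    (W : Finset ι → Finset ℕ)
    (hW : ∀ T, W T = (Finset.range (ℓ + 1)).filter
      (fun (i : ℕ) => (∀ u ∈ T, (i : ℤ) < t u) ∧ (∀ u ∈ S \ T, b u < (i : ℤ)))) :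
    (∀ T ⊆ S, ∃ a₀ b₀, W T = Finset.Icc a₀ b₀) ∧
    (∀ T₁ ⊆ S, ∀ T₂ ⊆ S, T₁ ≠ T₂ → Disjoint (W T₁) (W T₂)) ∧
    ((S.powerset.filter (fun T => (W T).Nonempty)).card ≤ S.card + 1) := by
  have hmem : ∀ T i, i ∈ W T ↔ i ≤ ℓ ∧ (∀ u ∈ T, (i:ℤ) < t u) ∧ (∀ u ∈ S \ T, b u < (i:ℤ)) := by
    intro T i
    rw [hW]
    simp [Finset.mem_filter, Finset.mem_range, Nat.lt_succ_iff]
  have hchar : ∀ T ⊆ S, ∀ i ∈ W T, T = S.filter (fun u => (i:ℤ) ≤ b u) := by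
    intro T hT i hi
    rw [hmem] at hi
    obtain ⟨-, h1, h2⟩ := hi
    ext u
    simp only [Finset.mem_filter]
    constructor
    · intro hu
      exact ⟨hT hu, by have := h1 u hu; have := htb u (hT hu); omega⟩
    · rintro ⟨huS, hub⟩
      by_contra hun
      have := h2 u (Finset.mem_sdiff.mpr ⟨huS, hun⟩)
      omega
  refine ⟨?_, ?_, ?_⟩
  · intro T hT
    rcases (W T).eq_empty_or_nonempty with h | h
    · exact ⟨1, 0, by simp [h]⟩
    · refine ⟨(W T).min' h, (W T).max' h, ?_⟩
      ext j
      simp only [Finset.mem_Icc]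
      constructor
      · intro hj; exact ⟨Finset.min'_le _ _ hj, Finset.le_max' _ _ hj⟩
      · rintro ⟨h1, h2⟩
        have hmin := (W T).min'_mem h
        have hmax := (W T).max'_mem h
        rw [hmem] at hmin hmax ⊢
        exact ⟨le_trans h2 hmax.1,
          fun u hu => lt_of_le_of_lt (by exact_mod_cast h2) (hmax.2.1 u hu),
          fun u hu => lt_of_lt_of_le (hmin.2.2 u hu) (by exact_mod_cast h1)⟩
  · intro T₁ h1 T₂ h2 hne
    rw [Finset.disjoint_left]
    intro i hi1 hi2
    exact hne ((hchar T₁ h1 i hi1).trans (hchar T₂ h2 i hi2).symm)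
  · have hinj : Set.InjOn (Finset.card : Finset ι → ℕ) ↑(S.powerset.filter (fun T => (W T).Nonempty)) := by
      intro T₁ hT₁ T₂ hT₂ hcard
      simp only [Finset.coe_filter, Set.mem_setOf_eq, Finset.mem_powerset] at hT₁ hT₂
      obtain ⟨hT₁S, i₁, hi₁⟩ := hT₁
      obtain ⟨hT₂S, i₂, hi₂⟩ := hT₂
      have e1 := hchar T₁ hT₁S i₁ hi₁
      have e2 := hchar T₂ hT₂S i₂ hi₂
      rcases le_total i₁ i₂ with h | h
      · have hsub : T₂ ⊆ T₁ := by
          rw [e1, e2]; intro u hu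
          simp only [Finset.mem_filter] at hu ⊢
          exact ⟨hu.1, le_trans (by exact_mod_cast h) hu.2⟩
        exact (Finset.eq_of_subset_of_card_le hsub hcard.le).symm
      · have hsub : T₁ ⊆ T₂ := by
          rw [e1, e2]; intro u hu
          simp only [Finset.mem_filter] at hu ⊢
          exact ⟨hu.1, le_trans (by exact_mod_cast h) hu.2⟩
        exact Finset.eq_of_subset_of_card_le hsub hcard.ge
    calc (S.powerset.filter (fun T => (W T).Nonempty)).card
        ≤ (Finset.range (S.card + 1)).card := by
          apply Finset.card_le_card_of_injOn Finset.card ?_ hinj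
          intro T hT
          simp only [Finset.mem_coe, Finset.mem_filter, Finset.mem_powerset] at hT
          simp [Nat.lt_succ_iff, Finset.card_le_card hT.1]
      _ = S.card + 1 := by simp
end
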